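/- arXiv:2011.04195 — 8 statements merged into one kernel-verified Lean document; each statement's English description precedes it below -/
import Mathlib

section
/- For all natural numbers b and n, the graph S_b □ H_n has queue-number at most 4. -/
/-!
Order the vertices of `H_n` row by row and colour its edges by direction (horizontal, vertical,
diagonal). All edges of one colour then have the same length, so no two of them nest, and two of
them cannot share an endpoint on the same side; that is, this is a strict 3-queue layout.

For `S_b □ H` with a strict `k`-queue layout of `H`, replace every vertex `h` of `H` by the block
of its `b + 1` copies, root copy first. Copies of an edge of `H` keep its colour and all star edges
form one extra queue. Star edges lie inside a block and start at its first vertex, so they do not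
nest. Two nested copy edges would project to edges of `H` that either nest or share an endpoint
while lying on the same side of it, which the strictness of the layout of `H` excludes, or to the
same edge of `H` in two copies, which the order inside blocks excludes.
-/

open SimpleGraph

/-- Two (unordered) pairs of vertices cross with respect to the strict order `lt`:
with `e = {v,w}`, `f = {x,y}`, `v ≺ w`, `x ≺ y`, they cross if
`v ≺ x ≺ w ≺ y` or `x ≺ v ≺ y ≺ w`. -/
def Cross {V : Type*} (lt : V → V → Prop) (e f : Sym2 V) : Prop :=
  ∃ v w x y : V, e = s(v, w) ∧ f = s(x, y) ∧
    ((lt v x ∧ lt x w ∧ lt w y) ∨ (lt x v ∧ lt v y ∧ lt y w))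

/-- Two (unordered) pairs of vertices nest with respect to the strict order `lt`:
with `e = {v,w}`, `f = {x,y}`, `v ≺ w`, `x ≺ y`, they nest if
`v ≺ x ≺ y ≺ w` or `x ≺ v ≺ w ≺ y`. -/
def Nest {V : Type*} (lt : V → V → Prop) (e f : Sym2 V) : Prop :=
  ∃ v w x y : V, e = s(v, w) ∧ f = s(x, y) ∧
    ((lt v x ∧ lt x y ∧ lt y w) ∨ (lt x v ∧ lt v w ∧ lt w y))

/-- `(lt, φ)` is a `k`-stack layout of `G`: `lt` is a linear (strict total) order on the
vertices and no two edges with the same colour cross. -/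
def IsStackLayout {V : Type*} {k : ℕ} (G : SimpleGraph V)
    (lt : V → V → Prop) (φ : Sym2 V → Fin k) : Prop :=
  IsStrictTotalOrder V lt ∧
    ∀ e ∈ G.edgeSet, ∀ f ∈ G.edgeSet, φ e = φ f → ¬ Cross lt e f

/-- `(lt, φ)` is a `k`-queue layout of `G`: `lt` is a linear (strict total) order on the
vertices and no two edges with the same colour nest. -/
def IsQueueLayout {V : Type*} {k : ℕ} (G : SimpleGraph V)
    (lt : V → V → Prop) (φ : Sym2 V → Fin k) : Prop :=
  IsStrictTotalOrder V lt ∧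
    ∀ e ∈ G.edgeSet, ∀ f ∈ G.edgeSet, φ e = φ f → ¬ Nest lt e f

/-- The stack-number of `G`: the least `k` such that `G` has a `k`-stack layout. -/
noncomputable def stackNumber {V : Type*} (G : SimpleGraph V) : ℕ :=
  sInf {k | ∃ (lt : V → V → Prop) (φ : Sym2 V → Fin k), IsStackLayout G lt φ}

/-- The queue-number of `G`: the least `k` such that `G` has a `k`-queue layout. -/
noncomputable def queueNumber {V : Type*} (G : SimpleGraph V) : ℕ :=
  sInf {k | ∃ (lt : V → V → Prop) (φ : Sym2 V → Fin k), IsQueueLayout G lt φ}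

/-- A queue layout is strict if for every vertex `u` and neighbours `v, w` of `u` with
`u ≺ v ≺ w` or `v ≺ w ≺ u`, the edges `uv` and `uw` get different colours. -/
def IsStrictQueueLayout {V : Type*} {k : ℕ} (G : SimpleGraph V)
    (lt : V → V → Prop) (φ : Sym2 V → Fin k) : Prop :=
  IsQueueLayout G lt φ ∧
    ∀ u v w : V, G.Adj u v → G.Adj u w →
      ((lt u v ∧ lt v w) ∨ (lt v w ∧ lt w u)) → φ s(u, v) ≠ φ s(u, w)

/-- The strict queue-number of `G`. -/
noncomputable def strictQueueNumber {V : Type*} (G : SimpleGraph V) : ℕ :=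
  sInf {k | ∃ (lt : V → V → Prop) (φ : Sym2 V → Fin k), IsStrictQueueLayout G lt φ}

/-- A stack layout is dispersable if the colouring is a proper edge-colouring. -/
def IsDispersableStackLayout {V : Type*} {k : ℕ} (G : SimpleGraph V)
    (lt : V → V → Prop) (φ : Sym2 V → Fin k) : Prop :=
  IsStackLayout G lt φ ∧
    ∀ u v w : V, G.Adj u v → G.Adj u w → v ≠ w → φ s(u, v) ≠ φ s(u, w)

/-- The dispersable stack-number of `G`. -/
noncomputable def dispersableStackNumber {V : Type*} (G : SimpleGraph V) : ℕ :=
  sInf {k | ∃ (lt : V → V → Prop) (φ : Sym2 V → Fin k), IsDispersableStackLayout G lt φ}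

/-- The star `S_b` with root `none` and leaves `some i`, `i : Fin b`. -/
def starGraphOpt (b : ℕ) : SimpleGraph (Option (Fin b)) :=
  SimpleGraph.fromRel (fun v w => v = none ∧ w ≠ none)

/-- The triangulated grid `H_n` on vertex set `Fin n × Fin n` (0-indexed), with horizontal
edges `(x,y)(x+1,y)`, vertical edges `(x,y)(x,y+1)` and diagonal edges `(x,y)(x+1,y+1)`. -/
def triGrid (n : ℕ) : SimpleGraph (Fin n × Fin n) :=
  SimpleGraph.fromRel (fun p q =>
    ((p.1 : ℕ) + 1 = (q.1 : ℕ) ∧ p.2 = q.2) ∨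
    (p.1 = q.1 ∧ (p.2 : ℕ) + 1 = (q.2 : ℕ)) ∨
    ((p.1 : ℕ) + 1 = (q.1 : ℕ) ∧ (p.2 : ℕ) + 1 = (q.2 : ℕ)))

open Function

section QueueLayout

variable {V : Type*} {k : ℕ} {G : SimpleGraph V} {lt : V → V → Prop} {φ : Sym2 V → Fin k}

theorem isQueueLayout_iff : IsQueueLayout G lt φ ↔ IsStrictTotalOrder V lt ∧
    ∀ v w x y, G.Adj v w → G.Adj x y → φ s(v, w) = φ s(x, y) →
      lt v x → lt x y → lt y w → False := by
  refine and_congr_right fun _ => ⟨fun h v w x y hvw hxy hc h₁ h₂ h₃ =>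
    h _ hvw _ hxy hc ⟨v, w, x, y, rfl, rfl, .inl ⟨h₁, h₂, h₃⟩⟩, ?_⟩
  rintro h e he f hf hc ⟨v, w, x, y, rfl, rfl, ⟨h₁, h₂, h₃⟩ | ⟨h₁, h₂, h₃⟩⟩
  · exact h v w x y he hf hc h₁ h₂ h₃
  · exact h x y v w hf he hc.symm h₁ h₂ h₃

theorem queueNumber_le (h : IsQueueLayout G lt φ) : queueNumber G ≤ k :=
  Nat.sInf_le ⟨lt, φ, h⟩

theorem isStrictQueueLayout_of_dist_eq {pos : V → ℕ} (hpos : Injective pos) (len : Fin k → ℕ)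
    (hlen : ∀ u v, G.Adj u v → Nat.dist (pos u) (pos v) = len (φ s(u, v))) :
    IsStrictQueueLayout G ((· < ·) on pos) φ := by
  refine ⟨isQueueLayout_iff.2 ⟨hpos.isStrictTotalOrder_onFun (r := (· < ·)),
    fun v w x y hvw hxy hc h₁ h₂ h₃ => ?_⟩, fun u v w huv huw hlt hc => ?_⟩
  · have hv := hlen v w hvw
    have hx := hlen x y hxy
    rw [hc] at hv
    simp only [onFun, Nat.dist] at *
    omega
  · have hv := hlen u v huv
    have hw := hlen u w huw
    rw [hc] at hv
    simp only [onFun, Nat.dist] at *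
    omega

end QueueLayout

section StarBoxProduct

variable {V L : Type*} {k b : ℕ} {H : SimpleGraph V} {φ : Sym2 V → Fin k}

-- The root copy `none` comes first in every block, as `(finSuccEquiv b).symm none = 0`.
def starBoxRank (f : V → L) (u : Option (Fin b) × V) : L ×ₗ Fin (b + 1) :=
  toLex (f u.2, (finSuccEquiv b).symm u.1)

def starBoxColouring (φ : Sym2 V → Fin k) (e : Sym2 (Option (Fin b) × V)) : Fin (k + 1) :=
  if (e.map Prod.fst).IsDiag then (φ (e.map Prod.snd)).succ else 0

variable {f : V → L} {u v w x y : Option (Fin b) × V}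

theorem starBoxRank_injective (hf : Injective f) : Injective (starBoxRank (b := b) f) := by
  intro u v h
  obtain ⟨h₂, h₁⟩ := Prod.ext_iff.1 (toLex.injective h)
  exact Prod.ext ((finSuccEquiv b).symm.injective h₁) (hf h₂)

variable [LinearOrder L]

theorem le_of_starBoxRank_lt (h : starBoxRank f u < starBoxRank f v) : f u.2 ≤ f v.2 :=
  (Prod.Lex.toLex_lt_toLex'.1 h).1

theorem lt_of_starBoxRank_lt (h : starBoxRank f u < starBoxRank f v) (he : u.2 = v.2) :
    (finSuccEquiv b).symm u.1 < (finSuccEquiv b).symm v.1 :=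
  (Prod.Lex.toLex_lt_toLex'.1 h).2 (congrArg f he)

theorem starBoxColouring_star_edge (h : (starGraphOpt b).Adj u.1 v.1) :
    starBoxColouring φ s(u, v) = 0 := by
  simp [starBoxColouring, h.ne]

theorem starBoxColouring_copy_edge (h : u.1 = v.1) :
    starBoxColouring φ s(u, v) = (φ s(u.2, v.2)).succ := by
  simp [starBoxColouring, h]

theorem starBoxRank_star_edges_not_nested (hf : Injective f) (hvw : v.2 = w.2)
    (hxy : (starGraphOpt b).Adj x.1 y.1) (hxy₂ : x.2 = y.2)
    (h₁ : starBoxRank f v < starBoxRank f x) (h₂ : starBoxRank f x < starBoxRank f y)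
    (h₃ : starBoxRank f y < starBoxRank f w) : False := by
  have hvx : v.2 = x.2 := hf <| (le_of_starBoxRank_lt h₁).antisymm <| by
    simpa [hxy₂, hvw] using le_of_starBoxRank_lt h₃
  have hvx₁ := lt_of_starBoxRank_lt h₁ hvx
  have hxy₁ := lt_of_starBoxRank_lt h₂ hxy₂
  rw [starGraphOpt, fromRel_adj] at hxy
  rcases hxy with ⟨-, ⟨hx, -⟩ | ⟨hy, -⟩⟩
  · simp [hx] at hvx₁
  · simp [hy] at hxy₁

theorem starBoxRank_copy_edges_not_nested (hf : Injective f)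
    (hH : IsStrictQueueLayout H ((· < ·) on f) φ) (hvw : v.1 = w.1) (hxy : x.1 = y.1)
    (hvw' : H.Adj v.2 w.2) (hxy' : H.Adj x.2 y.2)
    (hc : φ s(v.2, w.2) = φ s(x.2, y.2)) (h₁ : starBoxRank f v < starBoxRank f x)
    (h₂ : starBoxRank f x < starBoxRank f y) (h₃ : starBoxRank f y < starBoxRank f w) : False := by
  have hxy₂ : f x.2 < f y.2 := (le_of_starBoxRank_lt h₂).lt_of_ne fun he =>
    (lt_of_starBoxRank_lt h₂ (hf he)).ne (congrArg _ hxy)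
  rcases (le_of_starBoxRank_lt h₁).lt_or_eq with hvx | hvx <;>
    rcases (le_of_starBoxRank_lt h₃).lt_or_eq with hyw | hyw
  · exact (isQueueLayout_iff.1 hH.1).2 _ _ _ _ hvw' hxy' hc hvx hxy₂ hyw
  · rw [hf hyw] at hxy' hxy₂ hc
    refine hH.2 w.2 v.2 x.2 hvw'.symm hxy'.symm (.inr ⟨hvx, hxy₂⟩) ?_
    rw [Sym2.eq_swap, hc, Sym2.eq_swap]
  · rw [← hf hvx] at hxy' hxy₂ hc
    exact hH.2 v.2 y.2 w.2 hxy' hvw' (.inl ⟨hxy₂, hyw⟩) hc.symm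
  · exact (lt_of_starBoxRank_lt h₁ (hf hvx)).asymm
      (hvw ▸ hxy ▸ lt_of_starBoxRank_lt h₃ (hf hyw))

theorem IsStrictQueueLayout.starGraphOpt_boxProd (hf : Injective f)
    (hH : IsStrictQueueLayout H ((· < ·) on f) φ) :
    IsQueueLayout (starGraphOpt b □ H) ((· < ·) on starBoxRank f) (starBoxColouring φ) := by
  refine isQueueLayout_iff.2 ⟨(starBoxRank_injective hf).isStrictTotalOrder_onFun (r := (· < ·)),
    fun v w x y hvw hxy hc h₁ h₂ h₃ => ?_⟩
  rw [boxProd_adj] at hvw hxy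
  rcases hvw with ⟨hvw, hvw₂⟩ | ⟨hvw, hvw₁⟩ <;> rcases hxy with ⟨hxy, hxy₂⟩ | ⟨hxy, hxy₁⟩
  · exact starBoxRank_star_edges_not_nested hf hvw₂ hxy hxy₂ h₁ h₂ h₃
  · rw [starBoxColouring_star_edge hvw, starBoxColouring_copy_edge hxy₁] at hc
    exact Fin.succ_ne_zero _ hc.symm
  · rw [starBoxColouring_copy_edge hvw₁, starBoxColouring_star_edge hxy] at hc
    exact Fin.succ_ne_zero _ hc
  · rw [starBoxColouring_copy_edge hvw₁, starBoxColouring_copy_edge hxy₁] at hc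
    exact starBoxRank_copy_edges_not_nested hf hH hvw₁ hxy₁ hvw hxy (Fin.succ_injective _ hc)
      h₁ h₂ h₃

end StarBoxProduct

section TriGrid

variable {n : ℕ}

def rowMajor (n : ℕ) (p : Fin n × Fin n) : ℕ := finProdFinEquiv p.swap

theorem rowMajor_injective : Injective (rowMajor n) :=
  Fin.val_injective.comp (finProdFinEquiv.injective.comp Prod.swap_injective)

def triGridColouring (e : Sym2 (Fin n × Fin n)) : Fin 3 :=
  if (e.map Prod.snd).IsDiag then 0 else if (e.map Prod.fst).IsDiag then 1 else 2

theorem dist_rowMajor_of_adj {p q : Fin n × Fin n} (h : (triGrid n).Adj p q) :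
    Nat.dist (rowMajor n p) (rowMajor n q) = ![1, n, n + 1] (triGridColouring s(p, q)) := by
  obtain ⟨x, y⟩ := p
  obtain ⟨x', y'⟩ := q
  rw [triGrid, fromRel_adj] at h
  simp only [rowMajor, triGridColouring, Sym2.map_mk, Sym2.mk_isDiag_iff, Fin.ext_iff,
    finProdFinEquiv_apply_val, Prod.swap, Nat.dist] at h ⊢
  rcases h with ⟨-, (⟨h₁, h₂⟩ | ⟨h₁, h₂⟩ | ⟨h₁, h₂⟩) | (⟨h₁, h₂⟩ | ⟨h₁, h₂⟩ | ⟨h₁, h₂⟩)⟩ <;>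
    rw [← h₁, ← h₂] <;> split_ifs <;> simp only [Matrix.cons_val] <;> grind

theorem triGrid_isStrictQueueLayout :
    IsStrictQueueLayout (triGrid n) ((· < ·) on rowMajor n) triGridColouring :=
  isStrictQueueLayout_of_dist_eq rowMajor_injective _ fun _ _ => dist_rowMajor_of_adj

end TriGrid

/-- For all `b` and `n`, the graph `S_b □ H_n` has queue-number at most `4`. -/
theorem stmt2 (b n : ℕ) : queueNumber (starGraphOpt b □ triGrid n) ≤ 4 :=
  queueNumber_le (triGrid_isStrictQueueLayout.starGraphOpt_boxProd rowMajor_injective)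
end

section
/- Let b, n ∈ ℕ, let ≺ be a linear order on the vertex set of S_b □ H_n, and let L₂ be a set of c leaves of S_b. Then there exists a sequence u₁, …, u_d of distinct leaves in L₂ with d^{2^{n²−1}} ≥ c (i.e. d ≥ c^{1/2^{n²−1}}) such that for every vertex p of H_n, either (u₁,p) ≺ (u₂,p) ≺ ⋯ ≺ (u_d,p), or (u₁,p) ≻ (u₂,p) ≻ ⋯ ≻ (u_d,p). -/
open SimpleGraph

/-- The star `S_b` with root `none` and leaves `some i`, `i : Fin b`. -/
def starGraph (b : ℕ) : SimpleGraph (Option (Fin b)) :=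
  SimpleGraph.fromRel (fun v w => v = none ∧ w ≠ none)

/-!
Fix a vertex `p₀` of `H_n` and list the leaves of `L₂` in the order of their copies at `p₀`.
For each of the other `n² - 1` vertices `p` in turn, Erdős–Szekeres extracts from the current
sequence a subsequence of at least square-root length along which the copies at `p` are
increasing or decreasing. Subsequences inherit monotonicity, so the final sequence is monotone
at every vertex and its length `d` satisfies `d ^ 2 ^ (n² - 1) ≥ |L₂|`.
-/

namespace Finset

variable {α β : Type*} [LinearOrder α] [LinearOrder β]

open scoped Classical in
def increasingEndingAt (s : Finset α) (f : α → β) (i : α) : Finset (Finset α) :=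
  s.powerset.filter fun t : Finset α => i ∈ t ∧ (∀ j ∈ t, j ≤ i) ∧ StrictMonoOn f ↑t

def maxIncreasingLengthAt (s : Finset α) (f : α → β) (i : α) : ℕ :=
  (increasingEndingAt s f i).sup card

variable {s t : Finset α} {f : α → β} {i j : α}

lemma mem_increasingEndingAt :
    t ∈ increasingEndingAt s f i ↔ t ⊆ s ∧ i ∈ t ∧ (∀ j ∈ t, j ≤ i) ∧ StrictMonoOn f t := by
  simp [increasingEndingAt]

lemma singleton_mem_increasingEndingAt (hi : i ∈ s) : {i} ∈ increasingEndingAt s f i := by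
  simp [mem_increasingEndingAt, hi]

lemma exists_card_eq_maxIncreasingLengthAt (hi : i ∈ s) :
    ∃ t ∈ increasingEndingAt s f i, #t = maxIncreasingLengthAt s f i := by
  obtain ⟨t, ht, hcard⟩ :=
    exists_mem_eq_sup _ ⟨{i}, singleton_mem_increasingEndingAt (f := f) hi⟩ card
  exact ⟨t, ht, hcard.symm⟩

lemma one_le_maxIncreasingLengthAt (hi : i ∈ s) : 1 ≤ maxIncreasingLengthAt s f i :=
  le_sup (f := card) (singleton_mem_increasingEndingAt hi)

lemma maxIncreasingLengthAt_lt (hi : i ∈ s) (hj : j ∈ s) (hij : i < j) (hf : f i < f j) :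
    maxIncreasingLengthAt s f i < maxIncreasingLengthAt s f j := by
  obtain ⟨t, ht, hcard⟩ := exists_card_eq_maxIncreasingLengthAt (f := f) hi
  obtain ⟨hts, hit, hle, hmono⟩ := mem_increasingEndingAt.1 ht
  have hjt : j ∉ t := fun hjt => (hle j hjt).not_gt hij
  have hmono' : StrictMonoOn f ↑(insert j t) := by
    rw [coe_insert, strictMonoOn_insert_iff_of_forall_le fun k hk => (hle k hk).trans hij.le]
    refine ⟨fun k hk _ => ?_, hmono⟩
    rcases (hle k hk).lt_or_eq with hki | rfl
    · exact (hmono hk hit hki).trans hf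
    · exact hf
  have hle' : ∀ k ∈ insert j t, k ≤ j := by
    simpa using fun k hk => (hle k hk).trans hij.le
  classical
  rw [← hcard]
  exact (card_lt_card (ssubset_insert hjt)).trans_le <| le_sup (f := card) <|
    mem_increasingEndingAt.2 ⟨insert_subset hj hts, mem_insert_self j t, hle', hmono'⟩

lemma exists_strictMonoOn_forall_maxIncreasingLengthAt_le (s : Finset α) (f : α → β) :
    ∃ t ⊆ s, StrictMonoOn f t ∧ ∀ i ∈ s, maxIncreasingLengthAt s f i ≤ #t := by
  classical
  obtain ⟨t, ht, hmax⟩ :=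
    exists_max_image (s.powerset.filter fun t : Finset α => StrictMonoOn f ↑t) card
      ⟨∅, by simp [StrictMonoOn]⟩
  simp only [mem_filter, mem_powerset] at ht hmax
  refine ⟨t, ht.1, ht.2, fun i hi => ?_⟩
  obtain ⟨t', ht', hcard⟩ := exists_card_eq_maxIncreasingLengthAt (f := f) hi
  obtain ⟨ht's, -, -, hmono⟩ := mem_increasingEndingAt.1 ht'
  exact hcard ▸ hmax t' ⟨ht's, hmono⟩

/-- Erdős–Szekeres, in product form. -/
theorem exists_strictMonoOn_strictAntiOn_card_le_mul (hf : Set.InjOn f s) :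
    ∃ t₁ ⊆ s, ∃ t₂ ⊆ s, StrictMonoOn f t₁ ∧ StrictAntiOn f t₂ ∧ #s ≤ #t₁ * #t₂ := by
  obtain ⟨t₁, ht₁, hmono, hle₁⟩ := exists_strictMonoOn_forall_maxIncreasingLengthAt_le s f
  obtain ⟨t₂, ht₂, hanti, hle₂⟩ :=
    exists_strictMonoOn_forall_maxIncreasingLengthAt_le s (OrderDual.toDual ∘ f)
  refine ⟨t₁, ht₁, t₂, ht₂, hmono, strictMonoOn_toDual_comp_iff.1 hanti, ?_⟩
  -- Seidenberg's labelling: two increasing-length labels, for `f` and for `f` reversed.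
  let label (i : α) : ℕ × ℕ :=
    (maxIncreasingLengthAt s f i, maxIncreasingLengthAt s (OrderDual.toDual ∘ f) i)
  have hlabel : Set.InjOn label s := by
    intro i hi j hj heq
    by_contra hne
    wlog hij : i < j generalizing i j
    · exact this hj hi heq.symm (Ne.symm hne) ((not_lt.1 hij).lt_of_ne (Ne.symm hne))
    rcases lt_or_gt_of_ne ((hf.ne_iff hi hj).2 hne) with h | h
    · exact (maxIncreasingLengthAt_lt hi hj hij h).ne (congrArg Prod.fst heq)
    · exact (maxIncreasingLengthAt_lt (f := OrderDual.toDual ∘ f) hi hj hij h).ne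
        (congrArg Prod.snd heq)
  have hmaps : Set.MapsTo label s ↑(Icc 1 #t₁ ×ˢ Icc 1 #t₂) := fun i hi => by
    simp only [coe_product, coe_Icc, Set.mem_prod, Set.mem_Icc, label]
    exact ⟨⟨one_le_maxIncreasingLengthAt hi, hle₁ i hi⟩,
      ⟨one_le_maxIncreasingLengthAt hi, hle₂ i hi⟩⟩
  simpa using card_le_card_of_injOn label hmaps hlabel

theorem exists_subset_strictMonoOn_or_strictAntiOn (hf : Set.InjOn f s) :
    ∃ t ⊆ s, #s ≤ #t * #t ∧ (StrictMonoOn f t ∨ StrictAntiOn f t) := by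
  obtain ⟨t₁, ht₁, t₂, ht₂, hmono, hanti, hcard⟩ :=
    exists_strictMonoOn_strictAntiOn_card_le_mul hf
  rcases le_total #t₁ #t₂ with h | h
  · exact ⟨t₂, ht₂, hcard.trans (Nat.mul_le_mul_right _ h), Or.inr hanti⟩
  · exact ⟨t₁, ht₁, hcard.trans (Nat.mul_le_mul_left _ h), Or.inl hmono⟩

theorem exists_subset_forall_strictMonoOn_or_strictAntiOn {κ : Type*} (K : Finset κ)
    (f : κ → α → β) (hf : ∀ k ∈ K, Set.InjOn (f k) s) :
    ∃ t ⊆ s, #s ≤ #t ^ 2 ^ #K ∧ ∀ k ∈ K, StrictMonoOn (f k) t ∨ StrictAntiOn (f k) t := by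
  induction K using Finset.cons_induction with
  | empty => exact ⟨s, subset_rfl, by simp, by simp⟩
  | cons k K hk ih =>
    obtain ⟨t, hts, hcard, hmono⟩ := ih fun k' hk' => hf k' (mem_cons_of_mem hk')
    obtain ⟨t', ht't, hcard', hmono'⟩ :=
      exists_subset_strictMonoOn_or_strictAntiOn ((hf k (mem_cons_self k K)).mono hts)
    refine ⟨t', ht't.trans hts, ?_, ?_⟩
    · calc #s ≤ #t ^ 2 ^ #K := hcard
        _ ≤ (#t' * #t') ^ 2 ^ #K := by gcongr
        _ = #t' ^ 2 ^ #(cons k K hk) := by rw [card_cons, pow_succ, pow_mul', sq]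
    · rw [forall_mem_cons]
      exact ⟨hmono', fun k' hk' => (hmono k' hk').imp (·.mono ht't) (·.mono ht't)⟩

end Finset

open Finset in
theorem exists_injective_forall_strictMono_or_strictAnti {ι P β : Type*} [Fintype P]
    [LinearOrder β] (f : P → ι → β) (hf : ∀ p, Function.Injective (f p)) (s : Finset ι) :
    ∃ (d : ℕ) (u : Fin d → ι), Function.Injective u ∧ (∀ i, u i ∈ s) ∧
      #s ≤ d ^ 2 ^ (Fintype.card P - 1) ∧ ∀ p, StrictMono (f p ∘ u) ∨ StrictAnti (f p ∘ u) := by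
  cases isEmpty_or_nonempty P with
  | inl _ =>
    exact ⟨#s, fun i => s.equivFin.symm i, Subtype.val_injective.comp s.equivFin.symm.injective,
      fun i => (s.equivFin.symm i).2, by simp, isEmptyElim⟩
  | inr hP =>
    classical
    obtain ⟨p₀⟩ := hP
    -- Enumerating by `f p₀` makes `f p₀ ∘ u` increasing for free, hence the `- 1`.
    let : LinearOrder ι := LinearOrder.lift' (f p₀) (hf p₀)
    obtain ⟨t, hts, hcard, hmono⟩ :=
      exists_subset_forall_strictMonoOn_or_strictAntiOn (univ.erase p₀) f fun p _ => (hf p).injOn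
    let u := t.orderEmbOfFin rfl
    have hu : ∀ i, u i ∈ t := t.orderEmbOfFin_mem rfl
    refine ⟨#t, u, u.injective, fun i => hts (hu i), ?_, fun p => ?_⟩
    · rwa [card_erase_of_mem (mem_univ _), card_univ] at hcard
    by_cases hp : p = p₀
    · exact hp ▸ Or.inl u.strictMono
    · exact (hmono p (mem_erase.2 ⟨hp, mem_univ p⟩)).imp
        (fun h _ _ hij => h (hu _) (hu _) (u.strictMono hij))
        (fun h _ _ hij => h (hu _) (hu _) (u.strictMono hij))

/-- Given a linear order `lt` on the vertices of `S_b □ H_n` and a set `L₂`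
of `c` leaves, there is a sequence `u₁, …, u_d` of distinct leaves in `L₂` with
`d^(2^(n²-1)) ≥ c` such that for each vertex `p` of `H_n`, either
`(u₁,p) ≺ ⋯ ≺ (u_d,p)` or `(u₁,p) ≻ ⋯ ≻ (u_d,p)`. -/
theorem stmt7 (b n : ℕ)
    (lt : Option (Fin b) × (Fin n × Fin n) → Option (Fin b) × (Fin n × Fin n) → Prop)
    (hlt : IsStrictTotalOrder (Option (Fin b) × (Fin n × Fin n)) lt)
    (L₂ : Finset (Fin b)) :
    ∃ (d : ℕ) (u : Fin d → Fin b),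
      Function.Injective u ∧ (∀ i, u i ∈ L₂) ∧
      L₂.card ≤ d ^ (2 ^ (n ^ 2 - 1)) ∧
      ∀ p : Fin n × Fin n,
        (∀ i j : Fin d, i < j → lt (some (u i), p) (some (u j), p)) ∨
        (∀ i j : Fin d, i < j → lt (some (u j), p) (some (u i), p)) := by
  classical
  let : LinearOrder (Option (Fin b) × (Fin n × Fin n)) := linearOrderOfSTO lt
  obtain ⟨d, u, hu, hmem, hcard, hmono⟩ :=
    exists_injective_forall_strictMono_or_strictAnti
      (fun p q => ((some q, p) : Option (Fin b) × (Fin n × Fin n)))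
      (fun _ _ _ h => Option.some_injective _ (congrArg Prod.fst h)) L₂
  refine ⟨d, u, hu, hmem, by simpa [sq] using hcard, fun p => ?_⟩
  exact (hmono p).imp (fun h _ _ hij => h hij) (fun h _ _ hij => h hij)
end

section
/- (Hex Lemma) For every n ∈ ℕ and every 2-colouring c : V(H_n) → {red, blue} of the vertices of the triangulated grid H_n, the graph H_n contains a path on n vertices all of whose vertices receive the same colour. -/
open SimpleGraph

/-!
The Y theorem, by majority-vote reduction: on the triangular board `x ≤ y ≤ m + 1`, give each
upward triangle `{u, u + (0,1), u + (1,1)}` the majority colour of its three vertices; this colours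
the board `x ≤ y ≤ m`. Two adjacent triangles of the same majority colour `b` contain equal or
adjacent vertices of colour `b`, and a triangle whose corner lies on a side of the coarse board has
two vertices on the same side of the fine board, one of them of its majority colour. Hence a
monochromatic connected set meeting all three sides lifts from the coarse board to the fine one,
and by induction every 2-colouring of a triangular board has a monochromatic component meeting all
three sides.

For the Hex lemma, put the grid `H_{k+1}` in the corner `x ≤ k ≤ y` of the board of side `2k`
and colour the part below it blue and the part to its right red. A blue component meeting all
three sides then runs from the top row down to height `k`, a red one from the left column to
abscissa `k`; along a path the relevant coordinate changes by at most one per step, so the first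
`k + 1` vertices of such a path stay inside the grid.
-/

namespace SimpleGraph

variable {V : Type*} {G : SimpleGraph V}

lemma Walk.le_apply_getVert_add (f : V → ℕ) (hf : ∀ ⦃x y⦄, G.Adj x y → f x ≤ f y + 1)
    {u v : V} (p : G.Walk u v) (i : ℕ) : f u ≤ f (p.getVert i) + i := by
  induction i with
  | zero => rw [p.getVert_zero, Nat.add_zero]
  | succ i ih =>
    rcases Nat.lt_or_ge i p.length with hi | hi
    · have := hf (p.adj_getVert_succ hi)
      omega
    · rw [p.getVert_of_length_le hi] at ih
      rw [p.getVert_of_length_le (Nat.le_succ_of_le hi)]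
      omega

lemma Reachable.exists_path_fin_of_lipschitz (f : V → ℕ) (hf : ∀ ⦃x y⦄, G.Adj x y → f x ≤ f y + 1)
    {u v : V} (h : G.Reachable u v) {n : ℕ} (hn : f v + n ≤ f u + 1) :
    ∃ P : Fin n → V, Function.Injective P ∧
      (∀ i j : Fin n, (i : ℕ) + 1 = j → G.Adj (P i) (P j)) ∧ ∀ i : Fin n, f u ≤ f (P i) + i := by
  obtain ⟨p, hp⟩ := h.exists_isPath
  have hlen : n ≤ p.length + 1 := by
    have := p.le_apply_getVert_add f hf p.length
    rw [p.getVert_length] at this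
    omega
  refine ⟨fun i => p.getVert i, fun i j hij => ?_, fun i j hij => ?_,
    fun i => p.le_apply_getVert_add f hf i⟩
  · exact Fin.ext (hp.getVert_injOn (by simp; omega) (by simp; omega) hij)
  · show G.Adj (p.getVert i) (p.getVert j)
    rw [← hij]
    exact p.adj_getVert_succ (by omega)

end SimpleGraph

namespace HexLemma

def triLattice : SimpleGraph (ℕ × ℕ) :=
  SimpleGraph.fromRel fun p q =>
    (p.1 + 1 = q.1 ∧ p.2 = q.2) ∨ (p.1 = q.1 ∧ p.2 + 1 = q.2) ∨
      (p.1 + 1 = q.1 ∧ p.2 + 1 = q.2)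

lemma triLattice_adj {p q : ℕ × ℕ} :
    triLattice.Adj p q ↔
      (p.1 + 1 = q.1 ∧ p.2 = q.2) ∨ (p.1 = q.1 ∧ p.2 + 1 = q.2) ∨
        (p.1 + 1 = q.1 ∧ p.2 + 1 = q.2) ∨ (q.1 + 1 = p.1 ∧ q.2 = p.2) ∨
          (q.1 = p.1 ∧ q.2 + 1 = p.2) ∨ (q.1 + 1 = p.1 ∧ q.2 + 1 = p.2) := by
  rw [triLattice, fromRel_adj]
  refine ⟨fun h => by tauto, fun h => ⟨?_, by tauto⟩⟩
  rintro rfl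
  omega

def board (m : ℕ) : Set (ℕ × ℕ) := {p | p.1 ≤ p.2 ∧ p.2 ≤ m}

def monoSet (m : ℕ) (C : ℕ × ℕ → Bool) (b : Bool) : Set (ℕ × ℕ) := {p | p ∈ board m ∧ C p = b}

abbrev monoGraph (m : ℕ) (C : ℕ × ℕ → Bool) (b : Bool) : SimpleGraph (monoSet m C b) :=
  triLattice.induce (monoSet m C b)

def upTriangle (u : ℕ × ℕ) : Set (ℕ × ℕ) := {u, (u.1, u.2 + 1), (u.1 + 1, u.2 + 1)}

def majority (a b c : Bool) : Bool := a && b || b && c || c && a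

def majorityColouring (C : ℕ × ℕ → Bool) (u : ℕ × ℕ) : Bool :=
  majority (C u) (C (u.1, u.2 + 1)) (C (u.1 + 1, u.2 + 1))

lemma or_eq_of_majority_eq {a b c v : Bool} (h : majority a b c = v) :
    (a = v ∨ b = v) ∧ (b = v ∨ c = v) ∧ (c = v ∨ a = v) := by
  cases a <;> cases b <;> cases c <;> cases v <;> simp_all [majority]

lemma upTriangle_subset_board {m : ℕ} {u : ℕ × ℕ} (hu : u ∈ board m) :
    upTriangle u ⊆ board (m + 1) := by
  obtain ⟨h1, h2⟩ := hu
  rintro x (rfl | rfl | rfl) <;> simp only [board, Set.mem_ofPred_eq] <;> omega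

lemma triLattice_adj_of_mem_upTriangle {u x y : ℕ × ℕ} (hx : x ∈ upTriangle u)
    (hy : y ∈ upTriangle u) (hxy : x ≠ y) : triLattice.Adj x y := by
  rw [triLattice_adj]
  rcases hx with rfl | rfl | rfl <;> rcases hy with rfl | rfl | rfl <;> simp_all

variable {m : ℕ} {C : ℕ × ℕ → Bool} {b : Bool}

lemma reachable_of_mem_upTriangle {u : ℕ × ℕ} (x y : monoSet m C b)
    (hx : x.1 ∈ upTriangle u) (hy : y.1 ∈ upTriangle u) : (monoGraph m C b).Reachable x y := by
  by_cases hxy : x = y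
  · exact hxy ▸ Reachable.refl x
  · exact Adj.reachable (triLattice_adj_of_mem_upTriangle hx hy (Subtype.coe_ne_coe.mpr hxy))

/-- Either the common vertex of the two triangles has colour `b`, or both other vertices of each
triangle do. -/
lemma exists_mem_upTriangle_of_step {u v : ℕ × ℕ} (hu : majorityColouring C u = b)
    (hv : majorityColouring C v = b)
    (huv : (u.1 + 1 = v.1 ∧ u.2 = v.2) ∨ (u.1 = v.1 ∧ u.2 + 1 = v.2) ∨
      (u.1 + 1 = v.1 ∧ u.2 + 1 = v.2)) :
    ∃ x ∈ upTriangle u, ∃ y ∈ upTriangle v, C x = b ∧ C y = b ∧ (x = y ∨ triLattice.Adj x y) := by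
  obtain ⟨a, c⟩ := u
  obtain ⟨a', c'⟩ := v
  have hu := or_eq_of_majority_eq hu
  have hv := or_eq_of_majority_eq hv
  dsimp only at huv hu hv
  rcases huv with ⟨rfl, rfl⟩ | ⟨rfl, rfl⟩ | ⟨rfl, rfl⟩
  · by_cases hs : C (a + 1, c + 1) = b
    · exact ⟨_, by simp [upTriangle], _, by simp [upTriangle], hs, hs, Or.inl rfl⟩
    · exact ⟨(a, c), by simp [upTriangle], (a + 1, c), by simp [upTriangle], by tauto, by tauto,
        Or.inr (by simp [triLattice_adj])⟩
  · by_cases hs : C (a, c + 1) = b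
    · exact ⟨_, by simp [upTriangle], _, by simp [upTriangle], hs, hs, Or.inl rfl⟩
    · exact ⟨(a + 1, c + 1), by simp [upTriangle], (a + 1, c + 1 + 1), by simp [upTriangle],
        by tauto, by tauto, Or.inr (by simp [triLattice_adj])⟩
  · by_cases hs : C (a + 1, c + 1) = b
    · exact ⟨_, by simp [upTriangle], _, by simp [upTriangle], hs, hs, Or.inl rfl⟩
    · exact ⟨(a, c + 1), by simp [upTriangle], (a + 1, c + 1 + 1), by simp [upTriangle],
        by tauto, by tauto, Or.inr (by simp [triLattice_adj])⟩

lemma exists_mem_upTriangle_of_adj {u v : ℕ × ℕ} (hu : majorityColouring C u = b)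
    (hv : majorityColouring C v = b) (huv : triLattice.Adj u v) :
    ∃ x ∈ upTriangle u, ∃ y ∈ upTriangle v, C x = b ∧ C y = b ∧ (x = y ∨ triLattice.Adj x y) := by
  rw [triLattice, fromRel_adj] at huv
  rcases huv.2 with h | h
  · exact exists_mem_upTriangle_of_step hu hv h
  · obtain ⟨y, hy, x, hx, hyb, hxb, hxy⟩ := exists_mem_upTriangle_of_step hv hu h
    exact ⟨x, hx, y, hy, hxb, hyb, hxy.imp Eq.symm Adj.symm⟩

lemma reachable_of_reachable_majorityColouring {u v : monoSet m (majorityColouring C) b}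
    (h : (monoGraph m (majorityColouring C) b).Reachable u v) (x y : monoSet (m + 1) C b)
    (hx : x.1 ∈ upTriangle u) (hy : y.1 ∈ upTriangle v) :
    (monoGraph (m + 1) C b).Reachable x y := by
  obtain ⟨W⟩ := h
  induction W generalizing x with
  | nil => exact reachable_of_mem_upTriangle x y hx hy
  | @cons u w v huw W ih =>
    obtain ⟨x', hx', y', hy', hx'b, hy'b, hx'y'⟩ := exists_mem_upTriangle_of_adj u.2.2 w.2.2 huw
    let X : monoSet (m + 1) C b := ⟨x', upTriangle_subset_board u.2.1 hx', hx'b⟩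
    let Y : monoSet (m + 1) C b := ⟨y', upTriangle_subset_board w.2.1 hy', hy'b⟩
    have hXY : (monoGraph (m + 1) C b).Reachable X Y := by
      rcases hx'y' with h | h
      · exact (Subtype.ext h : X = Y) ▸ Reachable.refl X
      · exact Adj.reachable h
    exact ((reachable_of_mem_upTriangle x X hx hx').trans hXY).trans (ih Y hy' hy)

theorem exists_mono_Y (m : ℕ) (C : ℕ × ℕ → Bool) :
    ∃ (b : Bool) (p q r : monoSet m C b), p.1.1 = 0 ∧ q.1.2 = m ∧ r.1.1 = r.1.2 ∧
      (monoGraph m C b).Reachable p q ∧ (monoGraph m C b).Reachable q r := by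
  induction m generalizing C with
  | zero =>
    let o : monoSet 0 C (C (0, 0)) := ⟨(0, 0), ⟨le_rfl, le_rfl⟩, rfl⟩
    exact ⟨_, o, o, o, rfl, rfl, rfl, Reachable.refl o, Reachable.refl o⟩
  | succ m ih =>
    obtain ⟨b, ⟨p, hp, hpb⟩, ⟨q, hq, hqb⟩, ⟨r, hr, hrb⟩, hp0, hqm, hrd, hpq, hqr⟩ :=
      ih (majorityColouring C)
    obtain ⟨hp₁, -, -⟩ := or_eq_of_majority_eq hpb
    obtain ⟨-, hq₂, -⟩ := or_eq_of_majority_eq hqb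
    obtain ⟨-, -, hr₃⟩ := or_eq_of_majority_eq hrb
    dsimp only at hp0 hqm hrd
    obtain ⟨p', hp', hp'b, hp'0⟩ : ∃ x ∈ upTriangle p, C x = b ∧ x.1 = 0 := by
      rcases hp₁ with h | h
      · exact ⟨p, by simp [upTriangle], h, hp0⟩
      · exact ⟨(p.1, p.2 + 1), by simp [upTriangle], h, hp0⟩
    obtain ⟨q', hq', hq'b, hq'm⟩ : ∃ x ∈ upTriangle q, C x = b ∧ x.2 = m + 1 := by
      rcases hq₂ with h | h
      · exact ⟨(q.1, q.2 + 1), by simp [upTriangle], h, by simp [hqm]⟩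
      · exact ⟨(q.1 + 1, q.2 + 1), by simp [upTriangle], h, by simp [hqm]⟩
    obtain ⟨r', hr', hr'b, hr'd⟩ : ∃ x ∈ upTriangle r, C x = b ∧ x.1 = x.2 := by
      rcases hr₃ with h | h
      · exact ⟨(r.1 + 1, r.2 + 1), by simp [upTriangle], h, by simp [hrd]⟩
      · exact ⟨r, by simp [upTriangle], h, hrd⟩
    let P : monoSet (m + 1) C b := ⟨p', upTriangle_subset_board hp hp', hp'b⟩
    let Q : monoSet (m + 1) C b := ⟨q', upTriangle_subset_board hq hq', hq'b⟩
    let R : monoSet (m + 1) C b := ⟨r', upTriangle_subset_board hr hr', hr'b⟩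
    exact ⟨b, P, Q, R, hp'0, hq'm, hr'd, reachable_of_reachable_majorityColouring hpq P Q hp' hq',
      reachable_of_reachable_majorityColouring hqr Q R hq' hr'⟩

def gridSquare (k : ℕ) : Set (ℕ × ℕ) := {p | p.1 ≤ k ∧ k ≤ p.2 ∧ p.2 ≤ 2 * k}

/-- The reduction modulo `k + 1` only matters off `gridSquare k`. -/
def toGrid (k : ℕ) (p : ℕ × ℕ) : Fin (k + 1) × Fin (k + 1) :=
  (Fin.ofNat (k + 1) p.1, Fin.ofNat (k + 1) (p.2 - k))

/-- `true` is blue and `false` red. -/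
def hexColouring (k : ℕ) (c : Fin (k + 1) × Fin (k + 1) → Bool) (p : ℕ × ℕ) : Bool :=
  if p.1 ≤ k then (if k ≤ p.2 then c (toGrid k p) else true) else false

variable {k : ℕ} {p q : ℕ × ℕ}

lemma val_toGrid (hp : p ∈ gridSquare k) :
    ((toGrid k p).1 : ℕ) = p.1 ∧ ((toGrid k p).2 : ℕ) = p.2 - k := by
  obtain ⟨h1, h2, h3⟩ := hp
  simp only [toGrid, Fin.val_ofNat]
  constructor <;> apply Nat.mod_eq_of_lt <;> omega

lemma toGrid_injOn (k : ℕ) : Set.InjOn (toGrid k) (gridSquare k) := by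
  intro p hp q hq h
  obtain ⟨hp1, hp2⟩ := val_toGrid hp
  obtain ⟨hq1, hq2⟩ := val_toGrid hq
  rw [Prod.ext_iff, Fin.ext_iff, Fin.ext_iff, hp1, hp2, hq1, hq2] at h
  have := hp.2.1
  have := hq.2.1
  ext <;> omega

lemma triGrid_adj_toGrid (hp : p ∈ gridSquare k) (hq : q ∈ gridSquare k)
    (h : triLattice.Adj p q) : (triGrid (k + 1)).Adj (toGrid k p) (toGrid k q) := by
  have hne : toGrid k p ≠ toGrid k q := fun he => h.ne (toGrid_injOn k hp hq he)
  rw [triGrid, fromRel_adj]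
  refine ⟨hne, ?_⟩
  obtain ⟨hp1, hp2⟩ := val_toGrid hp
  obtain ⟨hq1, hq2⟩ := val_toGrid hq
  rw [Fin.ext_iff, Fin.ext_iff, hp1, hp2, hq1, hq2]
  have := hp.2.1
  have := hq.2.1
  rw [triLattice_adj] at h
  omega

variable {c : Fin (k + 1) × Fin (k + 1) → Bool}

lemma hexColouring_of_mem (hp : p ∈ gridSquare k) : hexColouring k c p = c (toGrid k p) := by
  simp [hexColouring, hp.1, hp.2.1]

lemma mem_gridSquare_of_red (hp : p ∈ board (2 * k)) (hc : hexColouring k c p = false)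
    (h : p.1 ≤ k) : p ∈ gridSquare k := by
  unfold hexColouring at hc
  split_ifs at hc
  exact ⟨h, by assumption, hp.2⟩

lemma mem_gridSquare_of_blue (hp : p ∈ board (2 * k)) (hc : hexColouring k c p = true)
    (h : k ≤ p.2) : p ∈ gridSquare k := by
  unfold hexColouring at hc
  split_ifs at hc
  exact ⟨by assumption, h, hp.2⟩

lemma exists_mono_path_in_gridSquare (k : ℕ) (c : Fin (k + 1) × Fin (k + 1) → Bool) :
    ∃ (b : Bool) (P : Fin (k + 1) → ℕ × ℕ), Function.Injective P ∧
      (∀ i j : Fin (k + 1), (i : ℕ) + 1 = j → triLattice.Adj (P i) (P j)) ∧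
      ∀ i, P i ∈ gridSquare k ∧ hexColouring k c (P i) = b := by
  obtain ⟨b, p, q, r, hp, hq, hr, hpq, hqr⟩ := exists_mono_Y (2 * k) (hexColouring k c)
  have hr₁ := r.2.1.1
  have hr₂ := r.2.1.2
  cases b with
  | false =>
    have hkr : k ≤ r.1.1 := by
      by_contra! h
      have := (mem_gridSquare_of_red r.2.1 r.2.2 h.le).2.1
      omega
    obtain ⟨P, hinj, hadj, hP⟩ := (hpq.trans hqr).exists_path_fin_of_lipschitz (n := k + 1)
      (fun x => 2 * k - x.1.1)
      (fun x y h => by have := triLattice_adj.mp (induce_adj.mp h); omega) (by omega)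
    refine ⟨false, fun i => P i, Subtype.val_injective.comp hinj, hadj, fun i => ?_⟩
    beta_reduce
    have := (P i).2.1.1
    have := (P i).2.1.2
    have := hP i
    exact ⟨mem_gridSquare_of_red (P i).2.1 (P i).2.2 (by omega), (P i).2.2⟩
  | true =>
    have hrk : r.1.2 ≤ k := by
      by_contra! h
      have := (mem_gridSquare_of_blue r.2.1 r.2.2 h.le).1
      omega
    obtain ⟨P, hinj, hadj, hP⟩ := hqr.exists_path_fin_of_lipschitz (n := k + 1)
      (fun x => x.1.2)
      (fun x y h => by have := triLattice_adj.mp (induce_adj.mp h); omega) (by omega)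
    refine ⟨true, fun i => P i, Subtype.val_injective.comp hinj, hadj, fun i => ?_⟩
    beta_reduce
    have := hP i
    exact ⟨mem_gridSquare_of_blue (P i).2.1 (P i).2.2 (by omega), (P i).2.2⟩

end HexLemma

/-- Hex Lemma: every 2-colouring of the vertices of the triangulated grid
`H_n` admits a monochromatic path on `n` vertices. -/
theorem stmt8 (n : ℕ) (c : Fin n × Fin n → Bool) :
    ∃ P : Fin n → Fin n × Fin n,
      Function.Injective P ∧
      (∀ i j : Fin n, (i : ℕ) + 1 = (j : ℕ) → (triGrid n).Adj (P i) (P j)) ∧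
      (∀ i j : Fin n, c (P i) = c (P j)) := by
  obtain _ | k := n
  · exact ⟨Fin.elim0, fun i => i.elim0, fun i => i.elim0, fun i => i.elim0⟩
  obtain ⟨b, P, hinj, hadj, hP⟩ := HexLemma.exists_mono_path_in_gridSquare k c
  have hcol (i : Fin (k + 1)) : c (HexLemma.toGrid k (P i)) = b := by
    rw [← (hP i).2, HexLemma.hexColouring_of_mem (hP i).1]
  refine ⟨fun i => HexLemma.toGrid k (P i),
    fun i j h => hinj (HexLemma.toGrid_injOn k (hP i).1 (hP j).1 h),
    fun i j h => HexLemma.triGrid_adj_toGrid (hP i).1 (hP j).1 (hadj i j h), fun i j => ?_⟩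
  rw [hcol, hcol]
end

section
/- Let s, d, n ∈ ℕ, let G := S_d □ H_n with leaves u₁, …, u_d of S_d and root r, let (≺, φ) be an s-stack layout of G, and let p₁, …, p_n be a path in H_n. Suppose: (i) for every edge xy of H_n and all leaves v, w of S_d, φ((v,x)(v,y)) = φ((w,x)(w,y)); (ii) for all vertices p, q of H_n and all leaves v, w of S_d, (v,p) ≺ (v,q) if and only if (w,p) ≺ (w,q); and (iii) for each j ∈ {1,…,n}, (u₁,p_j) ≺ (u₂,p_j) ≺ ⋯ ≺ (u_d,p_j). Then the subgraph X := S_d □ P of G (where P is the path p₁,…,p_n) contains a set of at least min{⌊d/2^n⌋, ⌈n/2⌉} edges that pairwise cross with respect to ≺. -/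
open SimpleGraph

/-!
Along the path, the copies `(uᵢ, pⱼ)` of the leaves form `n` levels of `d` points. An edge
`(uᵢ, pⱼ)(uᵢ, pⱼ₊₁)` has the colour of `(uᵢ', pⱼ)(uᵢ', pⱼ₊₁)`, so the two do not cross, which forces
consecutive levels to interleave: `(uᵢ, pⱼ₊₁) ≺ (uᵢ', pⱼ)` and `(uᵢ, pⱼ) ≺ (uᵢ', pⱼ₊₁)` for `i < i'`.
Iterating, a point of one level precedes every point of any other level whose index is at least
`n - 1` larger. With `K = min ⌊d/2ⁿ⌋ ⌈n/2⌉` and the threshold `τ = (n - 1) K`, at least `K` of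
the `n` roots `(r, pⱼ)` lie on the same side of their level's point of index `τ`, say above it
(the other case is the same after reversing the order and the leaf indices; `d ≥ 2ⁿ K` leaves
room for `τ` from both ends). Sorting these roots, the `m`-th one is joined to its leaf of index
`(n - 1) m`; any two such star edges then cross, since both leaves precede the lower root.
-/

open Function Finset

section Cross

variable {V : Type*} {lt : V → V → Prop} {e f : Sym2 V}

theorem Cross.symm (h : Cross lt e f) : Cross lt f e := by
  obtain ⟨v, w, x, y, he, hf, hc | hc⟩ := h
  · exact ⟨x, y, v, w, hf, he, Or.inr hc⟩
  · exact ⟨x, y, v, w, hf, he, Or.inl hc⟩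

theorem Cross.of_swap (h : Cross (swap lt) e f) : Cross lt e f := by
  obtain ⟨v, w, x, y, rfl, rfl, ⟨h₁, h₂, h₃⟩ | ⟨h₁, h₂, h₃⟩⟩ := h
  · exact ⟨w, v, y, x, Sym2.eq_swap, Sym2.eq_swap, Or.inr ⟨h₃, h₂, h₁⟩⟩
  · exact ⟨w, v, y, x, Sym2.eq_swap, Sym2.eq_swap, Or.inl ⟨h₃, h₂, h₁⟩⟩

theorem Cross.ne [Std.Irrefl lt] (h : Cross lt e f) : e ≠ f := by
  obtain ⟨v, w, x, y, rfl, rfl, h⟩ := h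
  intro hvw
  rcases Sym2.eq_iff.1 hvw with ⟨rfl, rfl⟩ | ⟨rfl, rfl⟩
  · rcases h with h | h
    · exact irrefl _ h.1
    · exact irrefl _ h.1
  · rcases h with h | h
    · exact irrefl _ h.2.1
    · exact irrefl _ h.2.1

theorem lt_and_lt_of_not_cross [IsStrictTotalOrder V lt] {a a' b b' : V} (ha : lt a a')
    (hb : lt b b') (hab : a' ≠ b) (hba : b' ≠ a) (hnc : ¬ Cross lt s(a, b) s(a', b')) :
    lt a b' ∧ lt b a' := by
  refine ⟨?_, ?_⟩
  · rcases trichotomous_of lt a b' with h | rfl | h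
    · exact h
    · exact absurd rfl hba
    · exact absurd ⟨b, a, b', a', Sym2.eq_swap, Sym2.eq_swap, Or.inl ⟨hb, h, ha⟩⟩ hnc
  · rcases trichotomous_of lt b a' with h | rfl | h
    · exact h
    · exact absurd rfl hab
    · exact absurd ⟨a, b, a', b', rfl, rfl, Or.inl ⟨ha, h, hb⟩⟩ hnc

end Cross

def Interleaved {V : Type*} {n d : ℕ} (lt : V → V → Prop) (A : Fin n → Fin d → V) : Prop :=
  ∀ j k : Fin n, (j : ℕ) + 1 = k → ∀ i i' : Fin d, i < i' →
    lt (A j i) (A k i') ∧ lt (A k i) (A j i')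

theorem interleaved_of_isStackLayout {V : Type*} {lt : V → V → Prop} {s n d : ℕ}
    {G : SimpleGraph V} {φ : Sym2 V → Fin s} (hG : IsStackLayout G lt φ) {A : Fin n → Fin d → V}
    (hlevel : ∀ j i i', i < i' → lt (A j i) (A j i'))
    (hdistinct : ∀ j k i i', i ≠ i' → A j i ≠ A k i')
    (hadj : ∀ j k : Fin n, (j : ℕ) + 1 = k → ∀ i, G.Adj (A j i) (A k i))
    (hφ : ∀ j k : Fin n, (j : ℕ) + 1 = k → ∀ i i', φ s(A j i, A k i) = φ s(A j i', A k i')) :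
    Interleaved lt A := by
  have := hG.1
  intro j k hjk i i' hii'
  exact lt_and_lt_of_not_cross (hlevel j i i' hii') (hlevel k i i' hii')
    (hdistinct j k i' i hii'.ne') (hdistinct k j i' i hii'.ne')
    (hG.2 _ (hadj j k hjk i) _ (hadj j k hjk i') (hφ j k hjk i i'))

namespace Interleaved

variable {V : Type*} {lt : V → V → Prop} {n d : ℕ} {A : Fin n → Fin d → V}

theorem swap_rev (hA : Interleaved lt A) : Interleaved (swap lt) fun j i => A j i.rev :=
  fun j k hjk i i' hii' => (hA j k hjk i'.rev i.rev (Fin.rev_lt_rev.2 hii')).symm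

theorem lt_of_add_le [IsTrans V lt] (hA : Interleaved lt A) (t : ℕ) {j k : Fin n}
    (hjk : (j : ℕ) + (t + 1) = k) {i i' : Fin d} (hii' : (i : ℕ) + (t + 1) ≤ i') :
    lt (A j i) (A k i') ∧ lt (A k i) (A j i') := by
  induction t generalizing j i i' with
  | zero => exact hA j k hjk i i' (Fin.lt_def.2 (by omega))
  | succ t ih =>
    let m : Fin n := ⟨j + 1, by omega⟩
    let iSucc : Fin d := ⟨i + 1, by omega⟩
    let iPred : Fin d := ⟨i' - 1, by omega⟩
    have hjm : (j : ℕ) + 1 = m := rfl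
    exact ⟨trans_of lt (hA j m hjm i iSucc (Fin.lt_def.2 (by simp [iSucc]))).1
        (ih (j := m) (by simp [m]; omega) (by simp [iSucc]; omega)).1,
      trans_of lt (ih (j := m) (i' := iPred) (by simp [m]; omega) (by simp [iPred]; omega)).2
        (hA j m hjm iPred i' (Fin.lt_def.2 (by simp [iPred]; omega))).2⟩

theorem lt_of_ne [IsTrans V lt] (hA : Interleaved lt A) {j k : Fin n} (hjk : j ≠ k)
    {i i' : Fin d} (hii' : (i : ℕ) + (n - 1) ≤ i') : lt (A j i) (A k i') := by
  rcases Fin.lt_or_lt_of_ne hjk with h | h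
  · rw [Fin.lt_def] at h
    exact (hA.lt_of_add_le (k - j - 1) (by omega) (by omega)).1
  · rw [Fin.lt_def] at h
    exact (hA.lt_of_add_le (j - k - 1) (by omega) (by omega)).2

theorem exists_pairwise_cross_of_lt_root [IsStrictTotalOrder V lt] (hA : Interleaved lt A)
    {r : Fin n → V} (hr : Injective r) {T : Finset (Fin n)} {τ : Fin d}
    (hτ : (n - 1) * #T ≤ τ) (hT : ∀ j ∈ T, lt (A j τ) (r j)) :
    ∃ g : Fin n → Fin d,
      (T : Set (Fin n)).Pairwise fun j k => Cross lt s(r j, A j (g j)) s(r k, A k (g k)) := by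
  classical
  let rank (j : Fin n) : ℕ := #{x ∈ T | lt (r x) (r j)}
  have rank_le (j : Fin n) : rank j ≤ #T := card_filter_le _ _
  have rank_lt {j : Fin n} (hj : j ∈ T) : rank j < #T :=
    card_lt_card ⟨filter_subset _ _, fun h => irrefl _ (mem_filter.1 (h hj)).2⟩
  have rank_strictMono {j k : Fin n} (hj : j ∈ T) (hjk : lt (r j) (r k)) : rank j < rank k :=
    card_lt_card ⟨fun x hx =>
        mem_filter.2 ⟨(mem_filter.1 hx).1, trans_of lt (mem_filter.1 hx).2 hjk⟩,
      fun h => irrefl _ (mem_filter.1 (h (mem_filter.2 ⟨hj, hjk⟩))).2⟩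
  let g (j : Fin n) : Fin d :=
    ⟨(n - 1) * rank j, lt_of_le_of_lt (le_trans (Nat.mul_le_mul_left _ (rank_le j)) hτ) τ.isLt⟩
  have spaced {j : Fin n} {m : ℕ} (h : rank j < m) : (g j : ℕ) + (n - 1) ≤ (n - 1) * m := by
    simpa [g, Nat.mul_succ] using Nat.mul_le_mul_left (n - 1) (Nat.succ_le_of_lt h)
  have cross_of_lt {j k : Fin n} (hj : j ∈ T) (hk : k ∈ T) (hjk : lt (r j) (r k)) :
      Cross lt s(r j, A j (g j)) s(r k, A k (g k)) := by
    have hne : j ≠ k := by rintro rfl; exact irrefl _ hjk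
    have h₁ : lt (A j (g j)) (A k (g k)) := hA.lt_of_ne hne (spaced (rank_strictMono hj hjk))
    have h₂ : lt (A k (g k)) (r j) :=
      trans_of lt (hA.lt_of_ne hne.symm ((spaced (rank_lt hk)).trans hτ)) (hT j hj)
    exact ⟨A j (g j), r j, A k (g k), r k, Sym2.eq_swap, Sym2.eq_swap, Or.inl ⟨h₁, h₂, hjk⟩⟩
  refine ⟨g, fun j hj k hk hne => ?_⟩
  rcases trichotomous_of lt (r j) (r k) with h | h | h
  · exact cross_of_lt hj hk h
  · exact absurd (hr h) hne
  · exact (cross_of_lt hk hj h).symm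

theorem exists_pairwise_cross [IsStrictTotalOrder V lt] (hA : Interleaved lt A)
    {r : Fin n → V} (hr : Injective r) {τ : Fin d} (hrτ : ∀ j, r j ≠ A j τ) {K : ℕ}
    (hK : 2 * K ≤ n + 1) (hτ : (n - 1) * K ≤ τ) (hτ_rev : (n - 1) * K ≤ τ.rev) :
    ∃ (T : Finset (Fin n)) (g : Fin n → Fin d), #T = K ∧
      (T : Set (Fin n)).Pairwise fun j k => Cross lt s(r j, A j (g j)) s(r k, A k (g k)) := by
  classical
  have hsplit := card_filter_add_card_filter_not (s := (univ : Finset (Fin n)))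
    fun j => lt (A j τ) (r j)
  rw [card_univ, Fintype.card_fin] at hsplit
  by_cases hbelow : K ≤ #{j | lt (A j τ) (r j)}
  · obtain ⟨T, hTτ, rfl⟩ := exists_subset_card_eq hbelow
    obtain ⟨g, hg⟩ := hA.exists_pairwise_cross_of_lt_root hr hτ
      fun j hj => (mem_filter.1 (hTτ hj)).2
    exact ⟨T, g, rfl, hg⟩
  · -- roots below their threshold point lie above it for the reversed order and reversed levels
    have habove : K ≤ #{j | ¬ lt (A j τ) (r j)} := by omega
    obtain ⟨T, hTτ, rfl⟩ := exists_subset_card_eq habove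
    have hT (j : Fin n) (hj : j ∈ T) : swap lt (A j τ.rev.rev) (r j) := by
      rw [Fin.rev_rev]
      exact (trichotomous_of lt (r j) (A j τ)).resolve_right
        (not_or.2 ⟨hrτ j, (mem_filter.1 (hTτ hj)).2⟩)
    obtain ⟨g, hg⟩ := hA.swap_rev.exists_pairwise_cross_of_lt_root hr hτ_rev hT
    exact ⟨T, fun j => (g j).rev, rfl, fun j hj k hk hne => (hg hj hk hne).of_swap⟩

end Interleaved

theorem two_mul_mul_lt_of_le_div_two_pow {d n K : ℕ} (hK : 0 < K) (hKd : K ≤ d / 2 ^ n) :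
    2 * ((n - 1) * K) < d := by
  have hn : 2 * (n - 1) + 1 ≤ 2 ^ n := by
    rcases n with _ | n
    · simp
    · have := n.lt_two_pow_self
      rw [pow_succ]
      omega
  calc 2 * ((n - 1) * K) < (2 * (n - 1) + 1) * K := by nlinarith
    _ ≤ 2 ^ n * K := Nat.mul_le_mul_right K hn
    _ ≤ d := by rw [mul_comm]; exact (Nat.le_div_iff_mul_le (by positivity)).1 hKd

theorem stmt9_general (s d n : ℕ)
    (lt : Option (Fin d) × (Fin n × Fin n) → Option (Fin d) × (Fin n × Fin n) → Prop)
    (φ : Sym2 (Option (Fin d) × (Fin n × Fin n)) → Fin s)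
    (hlayout : IsStackLayout (_root_.starGraph d □ triGrid n) lt φ)
    (u : Fin d → Fin d) (hu : Function.Injective u)
    (p : Fin n → Fin n × Fin n) (hp : Function.Injective p)
    (hpath : ∀ i j : Fin n, (i : ℕ) + 1 = (j : ℕ) → (triGrid n).Adj (p i) (p j))
    (h1 : ∀ x y : Fin n × Fin n, (triGrid n).Adj x y → ∀ v w : Fin d,
      φ s(((some v : Option (Fin d)), x), (some v, y)) = φ s((some w, x), (some w, y)))
    (h3 : ∀ j : Fin n, ∀ i i' : Fin d, i < i' →
      lt ((some (u i) : Option (Fin d)), p j) (some (u i'), p j)) :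
    ∃ E : Finset (Sym2 (Option (Fin d) × (Fin n × Fin n))),
      (∀ e ∈ E, e ∈ (_root_.starGraph d □ SimpleGraph.fromRel
        (fun q q' => ∃ i j : Fin n, (i : ℕ) + 1 = (j : ℕ) ∧ q = p i ∧ q' = p j)).edgeSet) ∧
      min (d / 2 ^ n) ((n + 1) / 2) ≤ E.card ∧
      (∀ e ∈ E, ∀ f ∈ E, e ≠ f → Cross lt e f) := by
  classical
  have := hlayout.1
  set K := min (d / 2 ^ n) ((n + 1) / 2)
  obtain hK | hK := K.eq_zero_or_pos
  · exact ⟨∅, by simp, by simp [hK], by simp⟩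
  have hτ : 2 * ((n - 1) * K) < d := two_mul_mul_lt_of_le_div_two_pow hK (min_le_left _ _)
  have hKn : K ≤ (n + 1) / 2 := min_le_right _ _
  let A (j : Fin n) (i : Fin d) : Option (Fin d) × (Fin n × Fin n) := (some (u i), p j)
  have hA : Interleaved lt A := interleaved_of_isStackLayout hlayout h3
    (fun _ _ _ _ hne h => hne (hu (Option.some_injective _ (congrArg Prod.fst h))))
    (fun j k hjk _ => by simp [A, boxProd_adj, hpath j k hjk])
    (fun j k hjk _ _ => h1 _ _ (hpath j k hjk) _ _)
  obtain ⟨T, g, hTK, hT⟩ := hA.exists_pairwise_cross (r := fun j => (none, p j))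
    (fun _ _ h => hp (congrArg Prod.snd h)) (τ := ⟨(n - 1) * K, by omega⟩) (by simp [A])
    (by omega) le_rfl (by simp only [Fin.val_rev]; omega)
  refine ⟨T.image fun j => s((none, p j), A j (g j)), ?_, ?_, ?_⟩
  · simp only [mem_image]
    rintro _ ⟨j, -, rfl⟩
    simp [A, boxProd_adj, _root_.starGraph]
  · rw [card_image_of_injOn fun j hj k hk h => by_contra fun hne => (hT hj hk hne).ne h, hTK]
  · simp only [mem_image]
    rintro _ ⟨j, hj, rfl⟩ _ ⟨k, hk, rfl⟩ hne
    exact hT hj hk fun h => hne (h ▸ rfl)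

/-- under the uniformity hypotheses (i)–(iii), the subgraph
`X = S_d □ P` of `S_d □ H_n` contains at least `min{⌊d/2^n⌋, ⌈n/2⌉}` pairwise crossing
edges with respect to the vertex order of the given `s`-stack layout. -/
theorem stmt9 (s d n : ℕ)
    (lt : Option (Fin d) × (Fin n × Fin n) → Option (Fin d) × (Fin n × Fin n) → Prop)
    (φ : Sym2 (Option (Fin d) × (Fin n × Fin n)) → Fin s)
    (hlayout : IsStackLayout (_root_.starGraph d □ triGrid n) lt φ)
    (u : Fin d → Fin d) (hu : Function.Injective u)
    (p : Fin n → Fin n × Fin n) (hp : Function.Injective p)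
    (hpath : ∀ i j : Fin n, (i : ℕ) + 1 = (j : ℕ) → (triGrid n).Adj (p i) (p j))
    (h1 : ∀ x y : Fin n × Fin n, (triGrid n).Adj x y → ∀ v w : Fin d,
      φ s(((some v : Option (Fin d)), x), (some v, y)) = φ s((some w, x), (some w, y)))
    (h2 : ∀ x y : Fin n × Fin n, ∀ v w : Fin d,
      lt ((some v : Option (Fin d)), x) (some v, y) ↔ lt (some w, x) (some w, y))
    (h3 : ∀ j : Fin n, ∀ i i' : Fin d, i < i' →
      lt ((some (u i) : Option (Fin d)), p j) (some (u i'), p j)) :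
    ∃ E : Finset (Sym2 (Option (Fin d) × (Fin n × Fin n))),
      (∀ e ∈ E, e ∈ (_root_.starGraph d □ SimpleGraph.fromRel
        (fun q q' => ∃ i j : Fin n, (i : ℕ) + 1 = (j : ℕ) ∧ q = p i ∧ q' = p j)).edgeSet) ∧
      min (d / 2 ^ n) ((n + 1) / 2) ≤ E.card ∧
      (∀ e ∈ E, ∀ f ∈ E, e ≠ f → Cross lt e f) :=
  stmt9_general s d n lt φ hlayout u hu p hp hpath h1 h3
end

section
/- Let ≺ be a linear order on a set V and let a₁, …, a_m, b₁, …, b_m be 2m distinct elements of V with a₁ ≺ a₂ ≺ ⋯ ≺ a_m. Suppose: (i) for all j, k ∈ {1,…,m}, a_j ≺ a_k if and only if b_j ≺ b_k; (ii) either a_j ≺ b_j for every j, or b_j ≺ a_j for every j; and (iii) no two of the pairs {a_j, b_j} and {a_k, b_k} with j ≠ k cross with respect to ≺. Then either a₁ ≺ b₁ ≺ a₂ ≺ b₂ ≺ ⋯ ≺ a_m ≺ b_m, or b₁ ≺ a₁ ≺ b₂ ≺ a₂ ≺ ⋯ ≺ b_m ≺ a_m. -/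
open SimpleGraph

theorem lt_of_not_cross {V : Type*} {lt : V → V → Prop} [Std.Trichotomous lt] {v w x y : V}
    (hvx : lt v x) (hwy : lt w y) (hxw : x ≠ w) (hcross : ¬ Cross lt s(v, w) s(x, y)) :
    lt w x := by
  rcases trichotomous_of lt w x with hwx | rfl | hxw'
  · exact hwx
  · exact absurd rfl hxw
  · exact absurd ⟨v, w, x, y, rfl, rfl, Or.inl ⟨hvx, hxw', hwy⟩⟩ hcross

theorem stmt10_general {V : Type*} (lt : V → V → Prop) (hlt : IsStrictTotalOrder V lt)
    (m : ℕ) (a b : Fin m → V)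
    (hab : ∀ i j : Fin m, a i ≠ b j)
    (hmono : ∀ i j : Fin m, i < j → lt (a i) (a j))
    (h1 : ∀ j k : Fin m, lt (a j) (a k) ↔ lt (b j) (b k))
    (h2 : (∀ j, lt (a j) (b j)) ∨ (∀ j, lt (b j) (a j)))
    (h3 : ∀ j k : Fin m, j ≠ k → ¬ Cross lt s(a j, b j) s(a k, b k)) :
    ((∀ j, lt (a j) (b j)) ∧ ∀ j k : Fin m, (j : ℕ) + 1 = (k : ℕ) → lt (b j) (a k)) ∨
    ((∀ j, lt (b j) (a j)) ∧ ∀ j k : Fin m, (j : ℕ) + 1 = (k : ℕ) → lt (a j) (b k)) := by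
  have := hlt
  have hbmono : ∀ j k : Fin m, j < k → lt (b j) (b k) :=
    fun j k hjk => (h1 j k).1 (hmono j k hjk)
  rcases h2 with hab' | hba
  · refine Or.inl ⟨hab', fun j k hjk => ?_⟩
    have hjk : j < k := Fin.lt_def.2 (by omega)
    exact lt_of_not_cross (hmono j k hjk) (hbmono j k hjk) (hab k j) (h3 j k hjk.ne)
  · refine Or.inr ⟨hba, fun j k hjk => ?_⟩
    have hjk : j < k := Fin.lt_def.2 (by omega)
    have hcross := h3 j k hjk.ne
    rw [Sym2.eq_swap (a := a j), Sym2.eq_swap (a := a k)] at hcross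
    exact lt_of_not_cross (hbmono j k hjk) (hmono j k hjk) (hab j k).symm hcross

/-- if `a₁ ≺ ⋯ ≺ a_m`, the `b_j` are ordered like the `a_j`, all `a_j ≺ b_j`
or all `b_j ≺ a_j`, and no two of the pairs `{a_j, b_j}` cross, then the two sequences
interleave perfectly: `a₁ ≺ b₁ ≺ a₂ ≺ b₂ ≺ ⋯` or `b₁ ≺ a₁ ≺ b₂ ≺ a₂ ≺ ⋯`. -/
theorem stmt10 {V : Type*} (lt : V → V → Prop) (hlt : IsStrictTotalOrder V lt)
    (m : ℕ) (a b : Fin m → V)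
    (hab : ∀ i j : Fin m, a i ≠ b j)
    (ha : Function.Injective a) (hb : Function.Injective b)
    (hmono : ∀ i j : Fin m, i < j → lt (a i) (a j))
    (h1 : ∀ j k : Fin m, lt (a j) (a k) ↔ lt (b j) (b k))
    (h2 : (∀ j, lt (a j) (b j)) ∨ (∀ j, lt (b j) (a j)))
    (h3 : ∀ j k : Fin m, j ≠ k → ¬ Cross lt s(a j, b j) s(a k, b k)) :
    ((∀ j, lt (a j) (b j)) ∧ ∀ j k : Fin m, (j : ℕ) + 1 = (k : ℕ) → lt (b j) (a k)) ∨
    ((∀ j, lt (b j) (a j)) ∧ ∀ j k : Fin m, (j : ℕ) + 1 = (k : ℕ) → lt (a j) (b k)) :=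
  stmt10_general lt hlt m a b hab hmono h1 h2 h3
end

section
/- Let G be a graph, let ≺ be a linear order on V(G), let r₁ ≺ r₂ ≺ ⋯ ≺ r_n be n distinct vertices of G, and let Z₁, …, Z_{d'} be pairwise disjoint sets of vertices of G, each disjoint from {r₁,…,r_n}, such that Z₁ ≺ Z₂ ≺ ⋯ ≺ Z_{d'} (meaning every element of Z_i precedes every element of Z_{i+1} in ≺) and such that each r_j has a neighbour in each Z_i. Then G contains a set of at least min{⌊d'/2⌋, ⌈n/2⌉} edges that pairwise cross with respect to ≺. -/
open SimpleGraph

lemma cross_symm' {V : Type*} (lt : V → V → Prop) (e f : Sym2 V) (h : Cross lt e f) :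
    Cross lt f e := by
  obtain ⟨a, b, c, d, he, hf, h⟩ := h
  exact ⟨c, d, a, b, hf, he, h.symm⟩

lemma cross_irrefl' {V : Type*} (lt : V → V → Prop) (hlt : IsStrictTotalOrder V lt)
    (e : Sym2 V) : ¬ Cross lt e e := by
  haveI := hlt
  rintro ⟨a, b, c, d, he, hf, h⟩
  rw [he, Sym2.eq_iff] at hf
  rcases hf with ⟨rfl, rfl⟩ | ⟨rfl, rfl⟩ <;>
    rcases h with ⟨h1, h2, h3⟩ | ⟨h1, h2, h3⟩
  · exact irrefl_of lt _ h1
  · exact irrefl_of lt _ h1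
  · exact irrefl_of lt _ h2
  · exact irrefl_of lt _ h2

lemma exists_crossing_finset' {V : Type*} (G : SimpleGraph V) (lt : V → V → Prop)
    (hlt : IsStrictTotalOrder V lt) (m : ℕ) (F : Fin m → Sym2 V)
    (hedge : ∀ t, F t ∈ G.edgeSet)
    (hc : ∀ s t : Fin m, (s : ℕ) < (t : ℕ) → Cross lt (F s) (F t)) :
    ∃ E : Finset (Sym2 V),
      (∀ e ∈ E, e ∈ G.edgeSet) ∧ m ≤ E.card ∧
      (∀ e ∈ E, ∀ f ∈ E, e ≠ f → Cross lt e f) := by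
  classical
  have hinj : Function.Injective F := by
    intro s t h
    by_contra hne
    have hne' : (s : ℕ) ≠ (t : ℕ) := fun hh => hne (Fin.ext hh)
    rcases hne'.lt_or_gt with hlt' | hlt'
    · have c := hc s t hlt'
      rw [h] at c
      exact cross_irrefl' lt hlt _ c
    · have c := hc t s hlt'
      rw [h] at c
      exact cross_irrefl' lt hlt _ c
  refine ⟨Finset.image F Finset.univ, ?_, ?_, ?_⟩
  · intro e he
    obtain ⟨t, _, rfl⟩ := Finset.mem_image.mp he
    exact hedge t
  · rw [Finset.card_image_of_injective _ hinj, Finset.card_univ, Fintype.card_fin]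
  · intro e he f hf hef
    obtain ⟨s, _, rfl⟩ := Finset.mem_image.mp he
    obtain ⟨t, _, rfl⟩ := Finset.mem_image.mp hf
    rcases lt_trichotomy (s : ℕ) (t : ℕ) with h | h | h
    · exact hc s t h
    · exact absurd (congrArg F (Fin.ext h)) hef
    · exact cross_symm' lt _ _ (hc t s h)

/-- if `r₁ ≺ ⋯ ≺ r_n` and `Z₁ ≺ ⋯ ≺ Z_{d'}` are pairwise disjoint vertex
sets avoiding the `r_j`, with each `r_j` having a neighbour in each `Z_i`, then `G`
contains at least `min{⌊d'/2⌋, ⌈n/2⌉}` pairwise crossing edges with respect to `lt`. -/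
theorem stmt12 {V : Type*} (G : SimpleGraph V) (lt : V → V → Prop)
    (hlt : IsStrictTotalOrder V lt) (n d' : ℕ)
    (r : Fin n → V) (hr : ∀ i j : Fin n, i < j → lt (r i) (r j))
    (Z : Fin d' → Set V)
    (hZr : ∀ i : Fin d', ∀ z ∈ Z i, ∀ j : Fin n, z ≠ r j)
    (hZdisj : ∀ i j : Fin d', i ≠ j → Disjoint (Z i) (Z j))
    (hZord : ∀ i j : Fin d', (i : ℕ) + 1 = (j : ℕ) → ∀ z ∈ Z i, ∀ z' ∈ Z j, lt z z')
    (hnb : ∀ j : Fin n, ∀ i : Fin d', ∃ z ∈ Z i, G.Adj (r j) z) :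
    ∃ E : Finset (Sym2 V),
      (∀ e ∈ E, e ∈ G.edgeSet) ∧
      min (d' / 2) ((n + 1) / 2) ≤ E.card ∧
      (∀ e ∈ E, ∀ f ∈ E, e ≠ f → Cross lt e f) := by
    classical
  haveI := hlt
  set m := min (d' / 2) ((n + 1) / 2) with hm
  rcases Nat.eq_zero_or_pos m with h0 | hmpos
  · exact ⟨∅, by simp, by simp [h0], by simp⟩
  have hd : 2 * m ≤ d' := by omega
  have hn : 2 * m ≤ n + 1 := by omega
  have hn1 : 0 < n := by omega
  have nonemptyZ : ∀ i : Fin d', ∃ z, z ∈ Z i := by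
    intro i
    obtain ⟨z, hz, _⟩ := hnb ⟨0, hn1⟩ i
    exact ⟨z, hz⟩
  have chain : ∀ (i j : Fin d'), (i : ℕ) < (j : ℕ) →
      ∀ z ∈ Z i, ∀ z' ∈ Z j, lt z z' := by
    have key : ∀ (k : ℕ) (i j : Fin d'), (j : ℕ) = (i : ℕ) + k + 1 →
        ∀ z ∈ Z i, ∀ z' ∈ Z j, lt z z' := by
      intro k
      induction k with
      | zero =>
        intro i j hij z hz z' hz'
        exact hZord i j (by omega) z hz z' hz'
      | succ k ih =>
        intro i j hij z hz z' hz'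
        have hjm : (j : ℕ) - 1 < d' := by omega
        obtain ⟨w, hw⟩ := nonemptyZ ⟨(j : ℕ) - 1, hjm⟩
        refine trans_of lt (ih i ⟨(j : ℕ) - 1, hjm⟩ ?_ z hz w hw)
          (hZord ⟨(j : ℕ) - 1, hjm⟩ j ?_ w hw z' hz')
        · show (j : ℕ) - 1 = (i : ℕ) + k + 1
          omega
        · show (j : ℕ) - 1 + 1 = (j : ℕ)
          omega
    intro i j hij
    exact key ((j : ℕ) - (i : ℕ) - 1) i j (by omega) 
  have hm1 : m - 1 < n := by omega
  by_cases hcase : ∀ i : Fin d', d' - m ≤ (i : ℕ) → ∀ z ∈ Z i, lt (r ⟨m - 1, hm1⟩) z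
  · -- Case A: the last m blocks are entirely to the right of r_{m-1}
    have hrz : ∀ t : Fin m, ∃ z, z ∈ Z ⟨d' - m + (t : ℕ), by have := t.isLt; omega⟩ ∧
        G.Adj (r ⟨(t : ℕ), by have := t.isLt; omega⟩) z := by
      intro t
      obtain ⟨z, hz, ha⟩ := hnb ⟨(t : ℕ), by have := t.isLt; omega⟩
        ⟨d' - m + (t : ℕ), by have := t.isLt; omega⟩
      exact ⟨z, hz, ha⟩
    choose z hzmem hzadj using hrz
    have hc : ∀ s t : Fin m, (s : ℕ) < (t : ℕ) →
        Cross lt (s(r ⟨(s : ℕ), by have := s.isLt; omega⟩, z s))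
          (s(r ⟨(t : ℕ), by have := t.isLt; omega⟩, z t)) := by
      intro s t hst
      refine ⟨_, _, _, _, rfl, rfl, Or.inl ⟨?_, ?_, ?_⟩⟩
      · exact hr _ _ (by exact hst)
      · -- lt (r t) (z s)
        have hv := hcase ⟨d' - m + (s : ℕ), by have := s.isLt; omega⟩
          (by simp) (z s) (hzmem s)
        have ht' : (t : ℕ) ≤ m - 1 := by have := t.isLt; omega
        rcases eq_or_lt_of_le ht' with he | hl
        · have : (⟨(t : ℕ), by have := t.isLt; omega⟩ : Fin n) = ⟨m - 1, hm1⟩ :=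
            Fin.ext he
          rw [this]
          exact hv
        · exact trans_of lt (hr _ ⟨m - 1, hm1⟩ hl) hv
      · exact chain _ _ (by simp; omega) _ (hzmem s) _ (hzmem t)
    obtain ⟨E, h1, h2, h3⟩ := exists_crossing_finset' G lt hlt m
      (fun t => s(r ⟨(t : ℕ), by have := t.isLt; omega⟩, z t))
      (fun t => (SimpleGraph.mem_edgeSet G).mpr (hzadj t)) hc
    exact ⟨E, h1, h2, h3⟩
  · -- Case B: the first m blocks are entirely to the left of r_{m-1}
    push_neg at hcase
    obtain ⟨i, hi, zz, hzz, hnlt⟩ := hcase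
    have hzv : lt zz (r ⟨m - 1, hm1⟩) := by
      rcases trichotomous_of lt zz (r ⟨m - 1, hm1⟩) with h | h | h
      · exact h
      · exact absurd h (hZr i zz hzz ⟨m - 1, hm1⟩)
      · exact absurd h hnlt
    have hB : ∀ i' : Fin d', (i' : ℕ) < m → ∀ z' ∈ Z i', lt z' (r ⟨m - 1, hm1⟩) := by
      intro i' hi' z' hz'
      exact trans_of lt (chain i' i (by omega) z' hz' zz hzz) hzv
    have hrz : ∀ t : Fin m, ∃ z, z ∈ Z ⟨(t : ℕ), by have := t.isLt; omega⟩ ∧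
        G.Adj (r ⟨m - 1 + (t : ℕ), by have := t.isLt; omega⟩) z := by
      intro t
      obtain ⟨z, hz, ha⟩ := hnb ⟨m - 1 + (t : ℕ), by have := t.isLt; omega⟩
        ⟨(t : ℕ), by have := t.isLt; omega⟩
      exact ⟨z, hz, ha⟩
    choose z hzmem hzadj using hrz
    have hc : ∀ s t : Fin m, (s : ℕ) < (t : ℕ) →
        Cross lt (s(z s, r ⟨m - 1 + (s : ℕ), by have := s.isLt; omega⟩))
          (s(z t, r ⟨m - 1 + (t : ℕ), by have := t.isLt; omega⟩)) := by
      intro s t hst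
      refine ⟨_, _, _, _, rfl, rfl, Or.inl ⟨?_, ?_, ?_⟩⟩
      · exact chain _ _ (by exact hst) _ (hzmem s) _ (hzmem t)
      · -- lt (z t) (r (m-1+s))
        have hv := hB ⟨(t : ℕ), by have := t.isLt; omega⟩ (by simp) (z t) (hzmem t)
        rcases Nat.eq_zero_or_pos (s : ℕ) with he | hpos
        · have : (⟨m - 1 + (s : ℕ), by have := s.isLt; omega⟩ : Fin n) = ⟨m - 1, hm1⟩ :=
            Fin.ext (show m - 1 + (s : ℕ) = m - 1 by omega)
          rw [this]
          exact hv
        · exact trans_of lt hv (hr ⟨m - 1, hm1⟩ _ (by simp; omega))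
      · exact hr _ _ (by simp; omega)
    obtain ⟨E, h1, h2, h3⟩ := exists_crossing_finset' G lt hlt m
      (fun t => s(z t, r ⟨m - 1 + (t : ℕ), by have := t.isLt; omega⟩))
      (fun t => (SimpleGraph.mem_edgeSet G).mpr ((hzadj t).symm)) hc
    exact ⟨E, h1, h2, h3⟩
end

section
/- For all finite graphs G₁ and G₂, the queue-number of the cartesian product satisfies qn(G₁ □ G₂) ≤ qn(G₁) + sqn(G₂). -/
open SimpleGraph

/-! Order `V₁ × V₂` lexicographically with the `V₂`-coordinate first, so that the copies of `G₁`
appear one after another in the order of `G₂`. An edge inside a copy of `G₁` keeps its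
`G₁`-colour; an edge between two copies gets its `G₂`-colour from a disjoint palette.
Two nested edges of the first kind lie in a single copy and project to nested edges of `G₁`.
Two nested edges of the second kind project to edges `vw`, `xy` of `G₂` with `v ≤ x < y ≤ w`;
unless these nest in `G₂` they share an endpoint, which is what strictness forbids. -/

section Existence

variable {V : Type*}

theorem not_nest_self [Preorder V] (e : Sym2 V) : ¬ Nest (· < ·) e e := by
  rintro ⟨v, w, x, y, rfl, hxy, hc⟩
  rcases Sym2.eq_iff.1 hxy with ⟨rfl, rfl⟩ | ⟨rfl, rfl⟩ <;> rcases hc with hc | hc <;> order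

theorem isStrictQueueLayout_of_injective [LinearOrder V] {k : ℕ} (G : SimpleGraph V)
    {φ : Sym2 V → Fin k} (hφ : φ.Injective) : IsStrictQueueLayout G (· < ·) φ := by
  refine ⟨⟨inferInstance, fun e _ f _ hef ↦ hφ hef ▸ not_nest_self e⟩, ?_⟩
  rintro u v w - - (huvw | huvw) hφuvw <;>
  · have hvw : v = w := Sym2.congr_right.1 (hφ hφuvw)
    order

theorem exists_isStrictQueueLayout [Finite V] (G : SimpleGraph V) :
    ∃ k, ∃ (lt : V → V → Prop) (φ : Sym2 V → Fin k), IsStrictQueueLayout G lt φ := by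
  obtain ⟨k, ⟨eV⟩⟩ := Finite.exists_equiv_fin V
  obtain ⟨m, ⟨eE⟩⟩ := Finite.exists_equiv_fin (Sym2 V)
  let : LinearOrder V := LinearOrder.lift' eV eV.injective
  exact ⟨m, _, eE, isStrictQueueLayout_of_injective G eE.injective⟩

end Existence

theorem IsStrictQueueLayout.colour_ne_of_le_of_lt_of_le {V : Type*} [LinearOrder V] {k : ℕ}
    {G : SimpleGraph V} {φ : Sym2 V → Fin k} (h : IsStrictQueueLayout G (· < ·) φ)
    {v w x y : V} (hvw : G.Adj v w) (hxy : G.Adj x y)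
    (hvx : v ≤ x) (hxy' : x < y) (hyw : y ≤ w) (hne : v ≠ x ∨ y ≠ w) :
    φ s(v, w) ≠ φ s(x, y) := by
  rcases hvx.lt_or_eq with hvx | rfl <;> rcases hyw.lt_or_eq with hyw | rfl
  · exact fun hφ ↦ h.1.2 _ hvw _ hxy hφ ⟨v, w, x, y, rfl, rfl, .inl ⟨hvx, hxy', hyw⟩⟩
  · rw [Sym2.eq_swap, Sym2.eq_swap (a := x)]
    exact h.2 y v x hvw.symm hxy.symm (.inr ⟨hvx, hxy'⟩)
  · exact (h.2 v y w hxy hvw (.inl ⟨hxy', hyw⟩)).symm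
  · simp at hne

section BoxProd

variable {V₁ V₂ : Type*} {a b : ℕ}

def boxProdOrder [LT V₁] [LT V₂] (p q : V₁ × V₂) : Prop :=
  toLex p.swap < toLex q.swap

theorem boxProdOrder_iff [LT V₁] [LT V₂] {p q : V₁ × V₂} :
    boxProdOrder p q ↔ p.2 < q.2 ∨ p.2 = q.2 ∧ p.1 < q.1 :=
  Prod.Lex.toLex_lt_toLex

instance [LinearOrder V₁] [LinearOrder V₂] :
    IsStrictTotalOrder (V₁ × V₂) boxProdOrder :=
  (toLex.injective.comp Prod.swap_injective).isStrictTotalOrder_onFun (· < ·)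

def boxProdColouring [DecidableEq V₂] (φ₁ : Sym2 V₁ → Fin a) (φ₂ : Sym2 V₂ → Fin b)
    (e : Sym2 (V₁ × V₂)) : Fin (a + b) :=
  finSumFinEquiv <|
    if (e.map Prod.snd).IsDiag then .inl (φ₁ (e.map Prod.fst)) else .inr (φ₂ (e.map Prod.snd))

theorem boxProdColouring_mk_of_snd_eq [DecidableEq V₂] (φ₁ : Sym2 V₁ → Fin a)
    (φ₂ : Sym2 V₂ → Fin b) {v w : V₁ × V₂} (h : v.2 = w.2) :
    boxProdColouring φ₁ φ₂ s(v, w) = finSumFinEquiv (.inl (φ₁ s(v.1, w.1))) := by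
  simp [boxProdColouring, h]

theorem boxProdColouring_mk_of_snd_ne [DecidableEq V₂] (φ₁ : Sym2 V₁ → Fin a)
    (φ₂ : Sym2 V₂ → Fin b) {v w : V₁ × V₂} (h : v.2 ≠ w.2) :
    boxProdColouring φ₁ φ₂ s(v, w) = finSumFinEquiv (.inr (φ₂ s(v.2, w.2))) := by
  simp [boxProdColouring, h]

variable [LinearOrder V₁] [LinearOrder V₂] [DecidableEq V₂]
  {G₁ : SimpleGraph V₁} {G₂ : SimpleGraph V₂} {φ₁ : Sym2 V₁ → Fin a} {φ₂ : Sym2 V₂ → Fin b}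

theorem boxProdColouring_ne_of_boxProdOrder (hQ₁ : IsQueueLayout G₁ (· < ·) φ₁)
    (hQ₂ : IsStrictQueueLayout G₂ (· < ·) φ₂) {v w x y : V₁ × V₂}
    (hvw : (G₁ □ G₂).Adj v w) (hxy : (G₁ □ G₂).Adj x y)
    (hvx : boxProdOrder v x) (hxy' : boxProdOrder x y) (hyw : boxProdOrder y w) :
    boxProdColouring φ₁ φ₂ s(v, w) ≠ boxProdColouring φ₁ φ₂ s(x, y) := by
  rw [boxProdOrder_iff] at hvx hxy' hyw
  have hvx₂ : v.2 ≤ x.2 := by rcases hvx with h | ⟨h, -⟩ <;> order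
  have hxy₂ : x.2 ≤ y.2 := by rcases hxy' with h | ⟨h, -⟩ <;> order
  have hyw₂ : y.2 ≤ w.2 := by rcases hyw with h | ⟨h, -⟩ <;> order
  rcases hvw with ⟨hvw, hvw₂⟩ | ⟨hvw, hvw₁⟩
  · have hx₂ : x.2 = v.2 := by order
    have hy₂ : y.2 = v.2 := by order
    have hxy : G₁.Adj x.1 y.1 := by
      rcases hxy with ⟨h, -⟩ | ⟨h, -⟩
      · exact h
      · exact absurd h (by rw [hx₂, hy₂]; exact G₂.irrefl)
    rw [boxProdColouring_mk_of_snd_eq _ _ hvw₂,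
      boxProdColouring_mk_of_snd_eq _ _ (hx₂.trans hy₂.symm), Ne, Equiv.apply_eq_iff_eq,
      Sum.inl.injEq]
    refine fun hφ ↦ hQ₁.2 _ hvw _ hxy hφ ⟨v.1, w.1, x.1, y.1, rfl, rfl, .inl ⟨?_, ?_, ?_⟩⟩
    · simpa [hx₂] using hvx
    · simpa [hx₂, hy₂] using hxy'
    · simpa [hy₂, ← hvw₂] using hyw
  · rw [boxProdColouring_mk_of_snd_ne _ _ hvw.ne]
    rcases hxy with ⟨-, hxy₂⟩ | ⟨hxy, hxy₁⟩
    · rw [boxProdColouring_mk_of_snd_eq _ _ hxy₂, Ne, Equiv.apply_eq_iff_eq]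
      exact Sum.inr_ne_inl
    rw [boxProdColouring_mk_of_snd_ne _ _ hxy.ne, Ne, Equiv.apply_eq_iff_eq, Sum.inr.injEq]
    refine hQ₂.colour_ne_of_le_of_lt_of_le hvw hxy hvx₂ (hxy₂.lt_of_ne hxy.ne) hyw₂ ?_
    -- otherwise `v.1 < x.1 = y.1 < w.1 = v.1`
    by_contra! h
    have : v.1 < x.1 := by simpa [h.1] using hvx
    have : y.1 < w.1 := by simpa [h.2] using hyw
    order

theorem IsQueueLayout.boxProd (hQ₁ : IsQueueLayout G₁ (· < ·) φ₁)
    (hQ₂ : IsStrictQueueLayout G₂ (· < ·) φ₂) :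
    IsQueueLayout (G₁ □ G₂) boxProdOrder (boxProdColouring φ₁ φ₂) := by
  refine ⟨inferInstance, ?_⟩
  rintro e he f hf hφ ⟨v, w, x, y, rfl, rfl, ⟨hvx, hxy, hyw⟩ | ⟨hxv, hvw, hwy⟩⟩
  · exact boxProdColouring_ne_of_boxProdOrder hQ₁ hQ₂ he hf hvx hxy hyw hφ
  · exact boxProdColouring_ne_of_boxProdOrder hQ₁ hQ₂ hf he hxv hvw hwy hφ.symm

end BoxProd

/-- `qn(G₁ □ G₂) ≤ qn(G₁) + sqn(G₂)` for all finite graphs `G₁, G₂`. -/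
theorem stmt13 {V₁ V₂ : Type*} [Fintype V₁] [Fintype V₂]
    (G₁ : SimpleGraph V₁) (G₂ : SimpleGraph V₂) :
    queueNumber (G₁ □ G₂) ≤ queueNumber G₁ + strictQueueNumber G₂ := by
  classical
  have hS₁ : {k | ∃ (lt : V₁ → V₁ → Prop) (φ : Sym2 V₁ → Fin k),
      IsQueueLayout G₁ lt φ}.Nonempty :=
    (exists_isStrictQueueLayout G₁).imp fun _ ⟨lt, φ, h⟩ ↦ ⟨lt, φ, h.1⟩
  obtain ⟨lt₁, φ₁, hQ₁⟩ := Nat.sInf_mem hS₁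
  obtain ⟨lt₂, φ₂, hQ₂⟩ := Nat.sInf_mem (exists_isStrictQueueLayout G₂)
  have := hQ₁.1
  have := hQ₂.1.1
  -- the `<` of `linearOrderOfSTO r` is `r` itself, so `hQ₁` and `hQ₂` are layouts for `(· < ·)`
  let := linearOrderOfSTO lt₁
  let := linearOrderOfSTO lt₂
  exact Nat.sInf_le ⟨boxProdOrder, _, hQ₁.boxProd hQ₂⟩
end

section
/- For every finite graph G₁ and every finite bipartite graph G₂, the stack-number of the cartesian product satisfies sn(G₁ □ G₂) ≤ sn(G₁) + dsn(G₂). -/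
open SimpleGraph

/-!
Lay out `G₁ □ G₂` block by block: the blocks `V₁ × {b}` follow a dispersable layout of
`G₂`, and inside each block the order of `G₁` is used, reversed on one colour class of a
2-colouring of `G₂`. Edges inside blocks reuse the stacks of `G₁`; two of them cannot
interleave unless they lie in the same block. Edges between blocks use the stacks of `G₂`.
Two such edges of the same colour either project to the same edge `ab` of `G₂`, and then
nest because the blocks `a` and `b` are ordered oppositely, or, by dispersability, project to
disjoint edges of `G₂`, and a crossing would project to a crossing in `G₂`.
-/

section

variable {V V₁ V₂ : Type*}

theorem not_cross_self {lt : V → V → Prop} [IsStrictOrder V lt] (e : Sym2 V) :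
    ¬ Cross lt e e := by
  rintro ⟨v, w, x, y, rfl, hf, ⟨h₁, h₂, h₃⟩ | ⟨h₁, h₂, h₃⟩⟩ <;>
    rcases Sym2.eq_iff.1 hf with ⟨rfl, rfl⟩ | ⟨rfl, rfl⟩
  · exact irrefl _ h₁
  · exact asymm h₁ h₃
  · exact irrefl _ h₁
  · exact irrefl _ h₂

namespace IsStackLayout

variable {k : ℕ} {G : SimpleGraph V} {lt : V → V → Prop} {φ : Sym2 V → Fin k}

theorem not_interleaved (h : IsStackLayout G lt φ) {v w x y : V} (hvw : G.Adj v w)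
    (hxy : G.Adj x y) (hφ : φ s(v, w) = φ s(x, y)) (hvx : lt v x) (hxw : lt x w)
    (hwy : lt w y) : False :=
  h.2 _ hvw _ hxy hφ ⟨v, w, x, y, rfl, rfl, .inl ⟨hvx, hxw, hwy⟩⟩

theorem of_not_interleaved (hlt : IsStrictTotalOrder V lt)
    (h : ∀ ⦃v w x y : V⦄, G.Adj v w → G.Adj x y → φ s(v, w) = φ s(x, y) →
      lt v x → lt x w → lt w y → False) :
    IsStackLayout G lt φ := by
  refine ⟨hlt, ?_⟩
  rintro e he f hf hφ ⟨v, w, x, y, rfl, rfl, ⟨hvx, hxw, hwy⟩ | ⟨hxv, hvy, hyw⟩⟩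
  · exact h he hf hφ hvx hxw hwy
  · exact h hf he hφ.symm hxv hvy hyw

theorem swap (h : IsStackLayout G lt φ) : IsStackLayout G (Function.swap lt) φ := by
  have := h.1
  refine of_not_interleaved inferInstance fun v w x y hvw hxy hφ hvx hxw hwy => ?_
  have hφ' : φ s(y, x) = φ s(w, v) := by simpa only [Sym2.eq_swap] using hφ.symm
  exact h.not_interleaved hxy.symm hvw.symm hφ' hwy hxw hvx

end IsStackLayout

theorem IsDispersableStackLayout.ne_of_color_eq {k : ℕ} {G : SimpleGraph V}
    {lt : V → V → Prop} {φ : Sym2 V → Fin k} (h : IsDispersableStackLayout G lt φ)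
    {a a' b b' : V} (ha : G.Adj a a') (hb : G.Adj b b') (hφ : φ s(a, a') = φ s(b, b'))
    (hne : s(a, a') ≠ s(b, b')) : a ≠ b ∧ a ≠ b' := by
  constructor <;> rintro rfl
  · exact h.2 a a' b' ha hb (fun h' => hne (h' ▸ rfl)) hφ
  · rw [Sym2.eq_swap (a := b)] at hφ
    exact h.2 a a' b ha hb.symm (fun h' => hne (h' ▸ Sym2.eq_swap)) hφ

theorem isDispersableStackLayout_of_injective {k : ℕ} (G : SimpleGraph V)
    {lt : V → V → Prop} [IsStrictTotalOrder V lt] {φ : Sym2 V → Fin k}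
    (hφ : Function.Injective φ) : IsDispersableStackLayout G lt φ := by
  refine ⟨⟨inferInstance, fun e _ f _ hef => hφ hef ▸ not_cross_self e⟩, ?_⟩
  intro u v w _ _ hvw huvw
  exact hvw (Sym2.congr_right.1 (hφ huvw))

theorem exists_isDispersableStackLayout [Finite V] (G : SimpleGraph V) :
    ∃ (k : ℕ) (lt : V → V → Prop) (φ : Sym2 V → Fin k), IsDispersableStackLayout G lt φ :=
  ⟨_, WellOrderingRel, _,
    isDispersableStackLayout_of_injective G (Finite.equivFin (Sym2 V)).injective⟩

theorem exists_isStackLayout [Finite V] (G : SimpleGraph V) :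
    ∃ (k : ℕ) (lt : V → V → Prop) (φ : Sym2 V → Fin k), IsStackLayout G lt φ :=
  have ⟨k, lt, φ, h⟩ := exists_isDispersableStackLayout G
  ⟨k, lt, φ, h.1⟩

theorem exists_isStackLayout_stackNumber [Finite V] (G : SimpleGraph V) :
    ∃ (lt : V → V → Prop) (φ : Sym2 V → Fin (stackNumber G)), IsStackLayout G lt φ :=
  Nat.sInf_mem (exists_isStackLayout G)

theorem exists_isDispersableStackLayout_dispersableStackNumber [Finite V]
    (G : SimpleGraph V) :
    ∃ (lt : V → V → Prop) (φ : Sym2 V → Fin (dispersableStackNumber G)),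
      IsDispersableStackLayout G lt φ :=
  Nat.sInf_mem (exists_isDispersableStackLayout G)

def blockOrder (lt₂ : V₂ → V₂ → Prop) (σ : V₂ → V₁ → V₁ → Prop) (p q : V₁ × V₂) : Prop :=
  lt₂ p.2 q.2 ∨ (p.2 = q.2 ∧ σ p.2 p.1 q.1)

namespace blockOrder

variable {lt₂ : V₂ → V₂ → Prop} {σ : V₂ → V₁ → V₁ → Prop}

theorem iff_sigmaLex {p q : V₁ × V₂} :
    blockOrder lt₂ σ p q ↔ Sigma.Lex lt₂ σ ⟨p.2, p.1⟩ ⟨q.2, q.1⟩ := by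
  simp only [blockOrder, Sigma.lex_iff, eq_rec_constant, exists_prop]
  exact or_congr_right (and_congr_right fun h => by rw [h])

instance [IsStrictTotalOrder V₂ lt₂] [∀ b, IsStrictTotalOrder V₁ (σ b)] :
    IsStrictTotalOrder (V₁ × V₂) (blockOrder lt₂ σ) :=
  have : IsStrictTotalOrder (Σ _ : V₂, V₁) (Sigma.Lex lt₂ σ) := {}
  RelEmbedding.isStrictTotalOrder (s := Sigma.Lex lt₂ σ)
    ⟨((Equiv.prodComm V₁ V₂).trans (Equiv.sigmaEquivProd V₂ V₁).symm).toEmbedding,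
      iff_sigmaLex.symm⟩

variable {u x : V₁} {a b : V₂}

theorem snd_lt (h : blockOrder lt₂ σ (u, a) (x, b)) (hne : a ≠ b) : lt₂ a b :=
  h.resolve_right fun h' => hne h'.1

theorem fst_lt [Std.Irrefl lt₂] (h : blockOrder lt₂ σ (u, a) (x, a)) : σ a u x :=
  (h.resolve_left (irrefl a)).2

end blockOrder

open Classical in
noncomputable def boxProdColoring {k₁ k₂ : ℕ} (φ₁ : Sym2 V₁ → Fin k₁)
    (φ₂ : Sym2 V₂ → Fin k₂) (e : Sym2 (V₁ × V₂)) : Fin (k₁ + k₂) :=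
  finSumFinEquiv <|
    if (e.map Prod.snd).IsDiag then .inl (φ₁ (e.map Prod.fst)) else .inr (φ₂ (e.map Prod.snd))

section boxProdColoring

variable {k₁ k₂ : ℕ} (φ₁ : Sym2 V₁ → Fin k₁) (φ₂ : Sym2 V₂ → Fin k₂)

theorem boxProdColoring_fst_edge (u u' : V₁) (a : V₂) :
    boxProdColoring φ₁ φ₂ s((u, a), (u', a)) = finSumFinEquiv (.inl (φ₁ s(u, u'))) := by
  simp [boxProdColoring]

theorem boxProdColoring_snd_edge (u : V₁) {a a' : V₂} (h : a ≠ a') :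
    boxProdColoring φ₁ φ₂ s((u, a), (u, a')) = finSumFinEquiv (.inr (φ₂ s(a, a'))) := by
  simp [boxProdColoring, h]

end boxProdColoring

section boxProd

variable {k₁ k₂ : ℕ} {G₁ : SimpleGraph V₁} {G₂ : SimpleGraph V₂} {lt₂ : V₂ → V₂ → Prop}
  {σ : V₂ → V₁ → V₁ → Prop} {φ₁ : Sym2 V₁ → Fin k₁} {φ₂ : Sym2 V₂ → Fin k₂}

theorem not_interleaved_of_fst_edges [IsStrictOrder V₂ lt₂]
    (h₁ : ∀ b, IsStackLayout G₁ (σ b) φ₁) {u u' x x' : V₁} {a b : V₂}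
    (hu : G₁.Adj u u') (hx : G₁.Adj x x') (hφ : φ₁ s(u, u') = φ₁ s(x, x'))
    (h₁₂ : blockOrder lt₂ σ (u, a) (x, b)) (h₂₃ : blockOrder lt₂ σ (x, b) (u', a))
    (h₃₄ : blockOrder lt₂ σ (u', a) (x', b)) : False := by
  obtain rfl : a = b := by
    by_contra hab
    exact asymm (h₁₂.snd_lt hab) (h₂₃.snd_lt (Ne.symm hab))
  exact (h₁ a).not_interleaved hu hx hφ h₁₂.fst_lt h₂₃.fst_lt h₃₄.fst_lt

theorem not_interleaved_of_snd_edges [IsStrictOrder V₂ lt₂] [∀ b, IsStrictOrder V₁ (σ b)]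
    (h₂ : IsDispersableStackLayout G₂ lt₂ φ₂)
    (hσ : ∀ ⦃a a'⦄, G₂.Adj a a' → ∀ ⦃u x⦄, σ a u x → σ a' x u) {u x : V₁} {a a' b b' : V₂}
    (ha : G₂.Adj a a') (hb : G₂.Adj b b') (hφ : φ₂ s(a, a') = φ₂ s(b, b'))
    (h₁₂ : blockOrder lt₂ σ (u, a) (x, b)) (h₂₃ : blockOrder lt₂ σ (x, b) (u, a'))
    (h₃₄ : blockOrder lt₂ σ (u, a') (x, b')) : False := by
  by_cases he : s(a, a') = s(b, b')
  · rcases Sym2.eq_iff.1 he with ⟨rfl, rfl⟩ | ⟨rfl, rfl⟩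
    · exact asymm h₃₄.fst_lt (hσ ha h₁₂.fst_lt)
    · exact asymm (h₁₂.snd_lt ha.ne) (h₃₄.snd_lt ha.ne.symm)
  · obtain ⟨hab, -⟩ := h₂.ne_of_color_eq ha hb hφ he
    obtain ⟨ha'b, ha'b'⟩ :=
      h₂.ne_of_color_eq ha.symm hb (by rwa [Sym2.eq_swap]) (by rwa [Sym2.eq_swap])
    exact h₂.1.not_interleaved ha hb hφ
      (h₁₂.snd_lt hab) (h₂₃.snd_lt ha'b.symm) (h₃₄.snd_lt ha'b')

theorem isStackLayout_boxProd (h₁ : ∀ b, IsStackLayout G₁ (σ b) φ₁)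
    (h₂ : IsDispersableStackLayout G₂ lt₂ φ₂)
    (hσ : ∀ ⦃a a'⦄, G₂.Adj a a' → ∀ ⦃u x⦄, σ a u x → σ a' x u) :
    IsStackLayout (G₁ □ G₂) (blockOrder lt₂ σ) (boxProdColoring φ₁ φ₂) := by
  have := h₂.1.1
  have := fun b => (h₁ b).1
  refine .of_not_interleaved inferInstance ?_
  rintro ⟨u, a⟩ ⟨u', a'⟩ ⟨x, b⟩ ⟨x', b'⟩ hvw hxy hφ h₁₂ h₂₃ h₃₄
  simp only [boxProd_adj] at hvw hxy
  rcases hvw with ⟨hu, rfl⟩ | ⟨ha, rfl⟩ <;> rcases hxy with ⟨hx, rfl⟩ | ⟨hb, rfl⟩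
  · rw [boxProdColoring_fst_edge, boxProdColoring_fst_edge] at hφ
    have hφ₁ := Sum.inl_injective (finSumFinEquiv.injective hφ)
    exact not_interleaved_of_fst_edges h₁ hu hx hφ₁ h₁₂ h₂₃ h₃₄
  · rw [boxProdColoring_fst_edge, boxProdColoring_snd_edge _ _ _ hb.ne] at hφ
    exact Sum.inl_ne_inr (finSumFinEquiv.injective hφ)
  · rw [boxProdColoring_snd_edge _ _ _ ha.ne, boxProdColoring_fst_edge] at hφ
    exact Sum.inr_ne_inl (finSumFinEquiv.injective hφ)
  · rw [boxProdColoring_snd_edge _ _ _ ha.ne, boxProdColoring_snd_edge _ _ _ hb.ne] at hφ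
    have hφ₂ := Sum.inr_injective (finSumFinEquiv.injective hφ)
    exact not_interleaved_of_snd_edges h₂ hσ ha hb hφ₂ h₁₂ h₂₃ h₃₄

end boxProd

theorem exists_twisted_isStackLayout {k : ℕ} {G₁ : SimpleGraph V₁} {G₂ : SimpleGraph V₂}
    {lt : V₁ → V₁ → Prop} {φ : Sym2 V₁ → Fin k} (h : IsStackLayout G₁ lt φ)
    (hG₂ : G₂.Colorable 2) :
    ∃ σ : V₂ → V₁ → V₁ → Prop, (∀ b, IsStackLayout G₁ (σ b) φ) ∧
      ∀ ⦃a a'⦄, G₂.Adj a a' → ∀ ⦃u x⦄, σ a u x → σ a' x u := by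
  classical
  obtain ⟨c⟩ := hG₂
  refine ⟨fun b => if c b = 0 then lt else Function.swap lt, fun b => ?_,
    fun a a' ha u x => ?_⟩
  · dsimp only
    split_ifs
    exacts [h, h.swap]
  · have := c.valid ha
    dsimp only
    generalize c a = i, c a' = j at this ⊢
    fin_cases i <;> fin_cases j <;> simp_all [Function.swap]

end

/-- `sn(G₁ □ G₂) ≤ sn(G₁) + dsn(G₂)` for every finite graph `G₁` and
every finite bipartite graph `G₂`. -/
theorem stmt14 {V₁ V₂ : Type*} [Fintype V₁] [Fintype V₂]
    (G₁ : SimpleGraph V₁) (G₂ : SimpleGraph V₂) (hbip : G₂.Colorable 2) :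
    stackNumber (G₁ □ G₂) ≤ stackNumber G₁ + dispersableStackNumber G₂ := by
  obtain ⟨lt₁, φ₁, h₁⟩ := exists_isStackLayout_stackNumber G₁
  obtain ⟨lt₂, φ₂, h₂⟩ := exists_isDispersableStackLayout_dispersableStackNumber G₂
  obtain ⟨σ, hσ₁, hσ⟩ := exists_twisted_isStackLayout h₁ hbip
  exact Nat.sInf_le ⟨_, _, isStackLayout_boxProd hσ₁ h₂ hσ⟩
end
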